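/- arXiv:0908.2750 — 7 statements merged into one kernel-verified Lean document; each statement's English description precedes it below -/
import Mathlib

section
/- Let G be a graph with maximum degree at most 2, let r ≥ 1, and let y_1, y_2, ..., y_{2r+2} be a path in G. If D is an r-identifying code in G, then it is impossible that both y_1 ∉ D and y_{2r+2} ∉ D. -/
/-- `Dr G r D x` = `N_r[x] ∩ D`. -/
def Dr {V : Type*} (G : SimpleGraph V) (r : ℕ) (D : Set V) (x : V) : Set V :=
  {y | y ∈ D ∧ G.dist x y ≤ r}

/-- `D` is an `r`-identifying code of `G`. -/
def IsIdCode {V : Type*} (G : SimpleGraph V) (r : ℕ) (D : Set V) : Prop :=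
  (∀ x, (Dr G r D x).Nonempty) ∧ ∀ x y, x ≠ y → Dr G r D x ≠ Dr G r D y

/-- `D` is an `r`-locating-dominating set of `G`. -/
def IsLD {V : Type*} (G : SimpleGraph V) (r : ℕ) (D : Set V) : Prop :=
  (∀ x ∉ D, (Dr G r D x).Nonempty) ∧
    ∀ x ∉ D, ∀ y ∉ D, x ≠ y → Dr G r D x ≠ Dr G r D y

/-- The cycle graph on `ZMod n`. -/
def cycleG (n : ℕ) : SimpleGraph (ZMod n) :=
  SimpleGraph.fromRel (fun x y => x - y = 1)

theorem stmt0 {V : Type*} (G : SimpleGraph V) [∀ v, Fintype (G.neighborSet v)]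
    (hdeg : ∀ v, G.degree v ≤ 2) (r : ℕ) (hr : 1 ≤ r)
    (y : Fin (2*r+2) → V) (hinj : Function.Injective y)
    (hadj : ∀ i : Fin (2*r+1), G.Adj (y i.castSucc) (y i.succ))
    (D : Set V) (hD : IsIdCode G r D) :
    ¬(y ⟨0, by omega⟩ ∉ D ∧ y ⟨2*r+1, by omega⟩ ∉ D) := by
  classical
  rintro ⟨h0, h1⟩
  -- adjacency at natural indices
  have adj : ∀ i : ℕ, (h : i + 1 ≤ 2*r+1) → G.Adj (y ⟨i, by omega⟩) (y ⟨i+1, by omega⟩) := by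
    intro i h
    exact hadj ⟨i, by omega⟩
  -- neighbor lemma
  have nbr : ∀ i : ℕ, ∀ _h1 : 1 ≤ i, ∀ _h2 : i ≤ 2*r, ∀ w : V, G.Adj (y ⟨i, by omega⟩) w →
      w = y ⟨i-1, by omega⟩ ∨ w = y ⟨i+1, by omega⟩ := by
    intro i h1 h2 w hw
    by_contra hcon
    push_neg at hcon
    obtain ⟨hc1, hc2⟩ := hcon
    have e1 : G.Adj (y ⟨i, by omega⟩) (y ⟨i-1, by omega⟩) := by
      have h := (adj (i-1) (by omega)).symm
      simp only [show i-1+1 = i from by omega] at h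
      exact h
    have e2 : G.Adj (y ⟨i, by omega⟩) (y ⟨i+1, by omega⟩) := adj i (by omega)
    have hsub : ({y ⟨i-1, by omega⟩, y ⟨i+1, by omega⟩, w} : Finset V) ⊆
        G.neighborFinset (y ⟨i, by omega⟩) := by
      intro z hz
      simp only [Finset.mem_insert, Finset.mem_singleton] at hz
      rw [SimpleGraph.mem_neighborFinset]
      rcases hz with h | h | h
      · exact h ▸ e1
      · exact h ▸ e2
      · exact h ▸ hw
    have hcard : ({y ⟨i-1, by omega⟩, y ⟨i+1, by omega⟩, w} : Finset V).card = 3 := by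
      rw [Finset.card_insert_of_notMem, Finset.card_insert_of_notMem, Finset.card_singleton]
      · simp only [Finset.mem_singleton]
        exact fun h => hc2 h.symm
      · simp only [Finset.mem_insert, Finset.mem_singleton]
        push_neg
        refine ⟨fun h => ?_, fun h => hc1 h.symm⟩
        have := hinj h
        simp only [Fin.mk.injEq] at this
        omega
    have hle := Finset.card_le_card hsub
    rw [hcard] at hle
    have := hdeg (y ⟨i, by omega⟩)
    rw [SimpleGraph.degree] at this
    omega
  -- distance along path
  have pd : ∀ d a : ℕ, ∀ _h : a + d ≤ 2*r+1,
      G.dist (y ⟨a, by omega⟩) (y ⟨a+d, by omega⟩) ≤ d := by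
    have pdw : ∀ d a : ℕ, ∀ _h : a + d ≤ 2*r+1,
        ∃ p : G.Walk (y ⟨a, by omega⟩) (y ⟨a+d, by omega⟩), p.length = d := by
      intro d
      induction d with
      | zero => intro a h; exact ⟨SimpleGraph.Walk.nil, rfl⟩
      | succ n ih =>
        intro a h
        obtain ⟨p, hp⟩ := ih a (by omega)
        refine ⟨p.concat (adj (a+n) (by omega)), ?_⟩
        rw [SimpleGraph.Walk.length_concat, hp]
    intro d a h
    obtain ⟨p, hp⟩ := pdw d a h
    have := SimpleGraph.dist_le p
    omega
  have pd' : ∀ a b : ℕ, ∀ _h1 : a ≤ b, ∀ _h2 : b ≤ 2*r+1,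
      G.dist (y ⟨a, by omega⟩) (y ⟨b, by omega⟩) ≤ b - a := by
    intro a b h1 h2
    have := pd (b-a) a (by omega)
    simp only [show a + (b-a) = b from by omega] at this
    exact this
  -- walks starting on the path stay on the path
  have stay : ∀ n : ℕ, ∀ i : ℕ, ∀ _h1 : n ≤ i, ∀ _h2 : i + n ≤ 2*r+1, ∀ v : V,
      ∀ p : G.Walk (y ⟨i, by omega⟩) v, p.length ≤ n →
      ∃ j, ∃ _hj : j ≤ 2*r+1, i - n ≤ j ∧ j ≤ i + n ∧ v = y ⟨j, by omega⟩ := by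
    intro n
    induction n with
    | zero =>
      intro i h1 h2 v p hp
      have := p.eq_of_length_eq_zero (by omega)
      exact ⟨i, by omega, by omega, by omega, this.symm⟩
    | succ n ih =>
      intro i h1 h2 v p hp
      cases p with
      | nil => exact ⟨i, by omega, by omega, by omega, rfl⟩
      | @cons _ w _ ha q =>
        have hq : q.length ≤ n := by
          simp only [SimpleGraph.Walk.length_cons] at hp; omega
        rcases nbr i (by omega) (by omega) w ha with hw | hw
        · obtain ⟨j, hj, hj1, hj2, hj3⟩ :=
            ih (i-1) (by omega) (by omega) v (q.copy hw rfl) (by simpa using hq)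
          exact ⟨j, hj, by omega, by omega, hj3⟩
        · obtain ⟨j, hj, hj1, hj2, hj3⟩ :=
            ih (i+1) (by omega) (by omega) v (q.copy hw rfl) (by simpa using hq)
          exact ⟨j, hj, by omega, by omega, hj3⟩
  -- the two middle vertices
  have hab : G.Adj (y ⟨r, by omega⟩) (y ⟨r+1, by omega⟩) := adj r (by omega)
  have hne : y ⟨r, by omega⟩ ≠ y ⟨r+1, by omega⟩ := by
    intro h
    have := hinj h
    simp only [Fin.mk.injEq] at this
    omega
  apply hD.2 _ _ hne
  ext v
  simp only [Dr, Set.mem_setOf_eq]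
  constructor
  · rintro ⟨hvD, hdist⟩
    refine ⟨hvD, ?_⟩
    by_cases hreach : G.Reachable (y ⟨r, by omega⟩) v
    · obtain ⟨p, hp⟩ := hreach.exists_walk_length_eq_dist
      obtain ⟨j, hj, hj1, hj2, hj3⟩ := stay r r le_rfl (by omega) v p (by omega)
      have hj0 : j ≠ 0 := by
        intro h
        subst h
        exact h0 (hj3 ▸ hvD)
      subst hj3
      rcases le_or_gt j (r+1) with hc | hc
      · have := pd' j (r+1) hc (by omega)
        rw [SimpleGraph.dist_comm] at this
        omega
      · have := pd' (r+1) j (by omega) hj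
        omega
    · have : ¬ G.Reachable (y ⟨r+1, by omega⟩) v := fun h => hreach (hab.reachable.trans h)
      rw [SimpleGraph.dist_eq_zero_of_not_reachable this]
      omega
  · rintro ⟨hvD, hdist⟩
    refine ⟨hvD, ?_⟩
    by_cases hreach : G.Reachable (y ⟨r+1, by omega⟩) v
    · obtain ⟨p, hp⟩ := hreach.exists_walk_length_eq_dist
      obtain ⟨j, hj, hj1, hj2, hj3⟩ := stay r (r+1) (by omega) (by omega) v p (by omega)
      have hj0 : j ≠ 2*r+1 := by
        intro h
        subst h
        exact h1 (hj3 ▸ hvD)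
      subst hj3
      rcases le_or_gt j r with hc | hc
      · have := pd' j r hc (by omega)
        rw [SimpleGraph.dist_comm] at this
        omega
      · have := pd' r j (by omega) hj
        omega
    · have : ¬ G.Reachable (y ⟨r, by omega⟩) v := fun h => hreach (hab.symm.reachable.trans h)
      rw [SimpleGraph.dist_eq_zero_of_not_reachable this]
      omega
end

section
/- Let C_n be the cycle on n vertices x_1, ..., x_n with indices modulo n, let r ≥ 1, and assume n ≥ 4r+2. Then D ⊆ V(C_n) is an r-identifying code if and only if (1) for every i ∈ {1,...,n}, x_i ∈ D or x_{i+2r+1} ∈ D (indices mod n), and (2) there do not exist 2r+1 consecutive vertices of C_n none of which belongs to D. -/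
section Aux
variable {n : ℕ}

lemma cadj (hn : 2 ≤ n) (x : ZMod n) : (cycleG n).Adj x (x + 1) := by
  haveI : NeZero n := ⟨by omega⟩
  haveI : Fact (1 < n) := ⟨by omega⟩
  have h1 : (1 : ZMod n) ≠ 0 := one_ne_zero
  rw [cycleG, SimpleGraph.fromRel_adj]
  exact ⟨by simp [h1], Or.inr (by ring)⟩

lemma walk_len (hn : 2 ≤ n) (x : ZMod n) (k : ℕ) :
    ∃ w : (cycleG n).Walk x (x + (k : ZMod n)), w.length = k := by
  induction k with
  | zero => exact ⟨SimpleGraph.Walk.nil.copy rfl (by simp), by simp⟩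
  | succ k ih =>
    obtain ⟨w, hw⟩ := ih
    refine ⟨(w.concat (cadj hn _)).copy rfl (by push_cast; ring), ?_⟩
    simp [SimpleGraph.Walk.length_concat, hw]

lemma cdist_le (hn : 2 ≤ n) (x : ZMod n) (k : ℕ) :
    (cycleG n).dist x (x + (k : ZMod n)) ≤ k := by
  obtain ⟨w, hw⟩ := walk_len hn x k
  exact le_trans (SimpleGraph.dist_le w) hw.le

lemma creach (hn : 2 ≤ n) (x y : ZMod n) : (cycleG n).Reachable x y := by
  haveI : NeZero n := ⟨by omega⟩
  obtain ⟨w, -⟩ := walk_len hn x ((y - x).val)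
  have h : x + (((y - x).val : ℕ) : ZMod n) = y := by
    rw [ZMod.natCast_zmod_val]; ring
  exact ⟨w.copy rfl h⟩

lemma cconn (hn : 2 ≤ n) : (cycleG n).Connected := by
  haveI : NeZero n := ⟨by omega⟩
  exact ⟨fun x y => creach hn x y⟩

lemma walk_signed {x y : ZMod n} (w : (cycleG n).Walk x y) :
    ∃ p q : ℕ, p + q = w.length ∧ (p : ZMod n) - (q : ZMod n) = y - x := by
  induction w with
  | nil => exact ⟨0, 0, by simp, by simp⟩
  | @cons u v z h w ih =>
    obtain ⟨p, q, hpq, hval⟩ := ih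
    rcases ((SimpleGraph.fromRel_adj _ _ _).1 h).2 with h1 | h1
    · exact ⟨p, q + 1, by simp [SimpleGraph.Walk.length_cons]; omega,
        by push_cast; linear_combination hval + h1⟩
    · exact ⟨p + 1, q, by simp [SimpleGraph.Walk.length_cons]; omega,
        by push_cast; linear_combination hval - h1⟩

lemma length_lb (hn : 2 ≤ n) {x y : ZMod n} (w : (cycleG n).Walk x y) :
    min (y - x).val (x - y).val ≤ w.length := by
  haveI : NeZero n := ⟨by omega⟩
  obtain ⟨p, q, hpq, hval⟩ := walk_signed w
  set v := (y - x).val with hv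
  have hvlt : v < n := ZMod.val_lt _
  have hcast : ((v : ℕ) : ZMod n) = y - x := ZMod.natCast_zmod_val _
  have h0 : (((p : ℤ) - q - v : ℤ) : ZMod n) = 0 := by
    push_cast
    rw [hcast]
    linear_combination hval
  obtain ⟨k, hk⟩ := (ZMod.intCast_zmod_eq_zero_iff_dvd _ _).1 h0
  by_cases hxy : x = y
  · simp [hxy]
  · have hyx : y - x ≠ 0 := fun h => hxy (by linear_combination -h)
    have hneg : (x - y).val = n - v := by
      have hxyeq : x - y = -(y - x) := by ring
      rw [hxyeq, ZMod.neg_val, if_neg hyx]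
    have hvne : v ≠ 0 := fun h => hyx ((ZMod.val_eq_zero _).1 h)
    rw [hneg]
    rcases lt_trichotomy k 0 with h | h | h
    · have hge : (n : ℤ) ≤ n * (-k) := le_mul_of_one_le_right (by positivity) (by omega)
      have : ∃ m : ℤ, (p : ℤ) - q - v = -m ∧ (n : ℤ) ≤ m := ⟨n * (-k), by linarith [hk], hge⟩
      obtain ⟨m, hm1, hm2⟩ := this
      omega
    · subst h
      simp at hk
      omega
    · have hge : (n : ℤ) ≤ n * k := le_mul_of_one_le_right (by positivity) (by omega)
      have : ∃ m : ℤ, (p : ℤ) - q - v = m ∧ (n : ℤ) ≤ m := ⟨n * k, hk, hge⟩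
      obtain ⟨m, hm1, hm2⟩ := this
      omega

lemma cdist (hn : 2 ≤ n) (x y : ZMod n) :
    (cycleG n).dist x y = min (y - x).val (x - y).val := by
  haveI : NeZero n := ⟨by omega⟩
  apply le_antisymm
  · apply le_min
    · have h := cdist_le hn x ((y - x).val)
      rw [ZMod.natCast_zmod_val] at h
      have e : x + (y - x) = y := by ring
      rwa [e] at h
    · have h := cdist_le hn y ((x - y).val)
      rw [ZMod.natCast_zmod_val] at h
      have e : y + (x - y) = x := by ring
      rw [e] at h
      rwa [SimpleGraph.dist_comm] at h
  · obtain ⟨w, hw⟩ := (creach hn x y).exists_walk_length_eq_dist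
    exact hw ▸ length_lb hn w

lemma cdist_add (hn : 2 ≤ n) (x : ZMod n) {a : ℕ} (ha : a < n) :
    (cycleG n).dist x (x + (a : ZMod n)) = min a (n - a) := by
  haveI : NeZero n := ⟨by omega⟩
  rw [cdist hn]
  have h1 : x + (a : ZMod n) - x = (a : ZMod n) := by ring
  have h2 : x - (x + (a : ZMod n)) = -(a : ZMod n) := by ring
  rw [h1, h2, ZMod.neg_val]
  rcases Nat.eq_zero_or_pos a with h | h
  · simp [h]
  · have hne : (a : ZMod n) ≠ 0 := by
      rw [Ne, ZMod.natCast_eq_zero_iff]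
      intro hdvd
      exact absurd (Nat.le_of_dvd h hdvd) (by omega)
    rw [if_neg hne, ZMod.val_cast_of_lt ha]

end Aux

section Main
variable {n r : ℕ}

lemma mem_ball (hr : 1 ≤ r) (hn : 4*r+2 ≤ n) (i : ZMod n) {c a : ℕ}
    (hcr : r ≤ c) (hc : c ≤ 3*r+1) (ha : a < n) :
    (cycleG n).dist (i + (c : ZMod n)) (i + (a : ZMod n)) ≤ r ↔ (c ≤ a + r ∧ a ≤ c + r) := by
  have hn2 : 2 ≤ n := by omega
  rcases le_or_gt c a with hca | hca
  · have key : i + (a : ZMod n) = (i + (c : ZMod n)) + (((a - c : ℕ) : ℕ) : ZMod n) := by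
      rw [Nat.cast_sub hca]; ring
    rw [key, cdist_add hn2 _ (by omega : a - c < n)]
    omega
  · have key : i + (c : ZMod n) = (i + (a : ZMod n)) + (((c - a : ℕ) : ℕ) : ZMod n) := by
      rw [Nat.cast_sub hca.le]; ring
    rw [SimpleGraph.dist_comm, key, cdist_add hn2 _ (by omega : c - a < n)]
    omega

theorem stmt1' (n r : ℕ) (hr : 1 ≤ r) (hn : 4*r+2 ≤ n) (D : Set (ZMod n)) :
    IsIdCode (cycleG n) r D ↔
      ((∀ i : ZMod n, i ∈ D ∨ i + ((2*r+1 : ℕ) : ZMod n) ∈ D) ∧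
        ¬∃ i : ZMod n, ∀ j : ℕ, j < 2*r+1 → i + (j : ZMod n) ∉ D) := by
  have hn2 : 2 ≤ n := by omega
  haveI : NeZero n := ⟨by omega⟩
  have hone : (1 : ZMod n) ≠ 0 := by
    haveI : Fact (1 < n) := ⟨by omega⟩; exact one_ne_zero
  constructor
  · rintro ⟨hne, hdist⟩
    constructor
    · -- condition (1)
      intro i
      by_contra hcon
      push_neg at hcon
      obtain ⟨hi, hi2⟩ := hcon
      -- x = i + r, y = i + (r+1)
      have hxy : i + ((r : ℕ) : ZMod n) ≠ i + (((r+1 : ℕ)) : ZMod n) := by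
        intro h
        apply hone
        have : ((r:ZMod n)) = (r:ZMod n) + 1 := by push_cast at h; linear_combination h
        linear_combination -this
      apply hdist _ _ hxy
      ext z
      simp only [Dr, Set.mem_setOf_eq]
      constructor
      · rintro ⟨hz, hd⟩
        refine ⟨hz, ?_⟩
        have ha : (z - i).val < n := ZMod.val_lt _
        have hzeq : z = i + (((z - i).val : ℕ) : ZMod n) := by
          rw [ZMod.natCast_zmod_val]; ring
        rw [hzeq] at hd ⊢
        rw [mem_ball hr hn i (le_refl r) (by omega) ha] at hd
        rw [mem_ball hr hn i (by omega) (by omega) ha]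
        have hane : (z - i).val ≠ 0 := by
          intro h0
          have : z = i := by
            have := (ZMod.val_eq_zero _).1 h0
            linear_combination this
          exact hi (this ▸ hz)
        omega
      · rintro ⟨hz, hd⟩
        refine ⟨hz, ?_⟩
        have ha : (z - i).val < n := ZMod.val_lt _
        have hzeq : z = i + (((z - i).val : ℕ) : ZMod n) := by
          rw [ZMod.natCast_zmod_val]; ring
        rw [hzeq] at hd ⊢
        rw [mem_ball hr hn i (by omega) (by omega) ha] at hd
        rw [mem_ball hr hn i (le_refl r) (by omega) ha]
        have hane : (z - i).val ≠ 2*r+1 := by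
          intro h0
          have : z = i + ((2*r+1 : ℕ) : ZMod n) := by
            rw [← h0, ZMod.natCast_zmod_val]; ring
          exact hi2 (this ▸ hz)
        omega
    · -- condition (2)
      rintro ⟨i, hi⟩
      obtain ⟨z, hz, hd⟩ := hne (i + ((r : ℕ) : ZMod n))
      have ha : (z - i).val < n := ZMod.val_lt _
      have hzeq : z = i + (((z - i).val : ℕ) : ZMod n) := by
        rw [ZMod.natCast_zmod_val]; ring
      rw [hzeq] at hd
      rw [mem_ball hr hn i (le_refl r) (by omega) ha] at hd
      exact hi _ (by omega) (hzeq ▸ hz)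
  · rintro ⟨h1, h2⟩
    push_neg at h2
    -- h2 : ∀ i, ∃ j, j < 2r+1 ∧ i + j ∈ D
    have hnonempty : ∀ x : ZMod n, (Dr (cycleG n) r D x).Nonempty := by
      intro x
      set i := x - ((r : ℕ) : ZMod n) with hi
      obtain ⟨j, hj, hjD⟩ := h2 i
      refine ⟨_, hjD, ?_⟩
      have hx : x = i + ((r : ℕ) : ZMod n) := by rw [hi]; ring
      rw [hx]
      rw [mem_ball (c := r) (a := j) hr hn i (le_refl r) (by omega) (by omega)]
      omega
    refine ⟨hnonempty, ?_⟩
    -- distinctness; key sub-lemma for overlapping balls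
    have caseA : ∀ x y : ZMod n, 1 ≤ (y - x).val → (y - x).val ≤ 2*r →
        Dr (cycleG n) r D x ≠ Dr (cycleG n) r D y := by
      intro x y hd1 hd2 heq
      set d := (y - x).val with hdd
      set i := x - ((r : ℕ) : ZMod n) with hi
      have hx : x = i + ((r : ℕ) : ZMod n) := by rw [hi]; ring
      have hy : y = i + (((r + d : ℕ)) : ZMod n) := by
        rw [hi]
        push_cast
        have : ((d : ℕ) : ZMod n) = y - x := by rw [hdd]; exact ZMod.natCast_zmod_val _
        rw [this]; ring
      rcases h1 i with hD | hD
      · -- i ∈ D: i ∈ Dr x \ Dr y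
        have hmem : i ∈ Dr (cycleG n) r D x := by
          refine ⟨hD, ?_⟩
          have h' : (cycleG n).dist (i + ((r:ℕ) : ZMod n)) (i + ((0:ℕ) : ZMod n)) ≤ r :=
            (mem_ball (c := r) (a := 0) hr hn i (le_refl r) (by omega) (by omega)).mpr
              (by omega)
          rw [← hx] at h'
          simpa using h'
        rw [heq] at hmem
        obtain ⟨-, hdy⟩ := hmem
        rw [hy] at hdy
        have h'' := (mem_ball (c := r + d) (a := 0) hr hn i (by omega) (by omega)
          (by omega)).mp (by simpa using hdy)
        omega
      · -- i + (2r+1) ∈ D: ∈ Dr y \ Dr x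
        have hmem : i + ((2*r+1 : ℕ) : ZMod n) ∈ Dr (cycleG n) r D y := by
          refine ⟨hD, ?_⟩
          rw [hy]
          rw [mem_ball hr hn i (by omega) (by omega) (by omega)]
          omega
        rw [← heq] at hmem
        obtain ⟨-, hdx⟩ := hmem
        rw [hx] at hdx
        rw [mem_ball hr hn i (le_refl r) (by omega) (by omega)] at hdx
        omega
    intro x y hxy heq
    have hyx : y - x ≠ 0 := fun h => hxy (by linear_combination -h)
    have hd1 : 1 ≤ (y - x).val := by
      rcases Nat.eq_zero_or_pos (y - x).val with h | h
      · exact absurd ((ZMod.val_eq_zero _).1 h) hyx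
      · omega
    have hdlt : (y - x).val < n := ZMod.val_lt _
    rcases le_or_gt (y - x).val (2*r) with hcase | hcase
    · exact caseA x y hd1 hcase heq
    · rcases le_or_gt (n - 2*r) (y - x).val with hcase2 | hcase2
      · -- symmetric case
        have hneg : (x - y).val = n - (y - x).val := by
          have hxyeq : x - y = -(y - x) := by ring
          rw [hxyeq, ZMod.neg_val, if_neg hyx]
        exact caseA y x (by omega) (by omega) heq.symm
      · -- disjoint balls
        obtain ⟨z, hz, hdz⟩ := hnonempty x
        have hmem : z ∈ Dr (cycleG n) r D y := heq ▸ ⟨hz, hdz⟩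
        obtain ⟨-, hdzy⟩ := hmem
        have htri : (cycleG n).dist x y ≤ (cycleG n).dist x z + (cycleG n).dist z y :=
          (cconn hn2).dist_triangle
        rw [show (cycleG n).dist z y = (cycleG n).dist y z from SimpleGraph.dist_comm]
          at htri
        have hdxy : (cycleG n).dist x y = min ((y-x).val) (n - (y-x).val) := by
          have hy2 : y = x + (((y - x).val : ℕ) : ZMod n) := by
            rw [ZMod.natCast_zmod_val]; ring
          conv_lhs => rw [hy2]
          exact cdist_add hn2 x hdlt
        omega

end Main

theorem stmt1 (n r : ℕ) (hr : 1 ≤ r) (hn : 4*r+2 ≤ n) (D : Set (ZMod n)) :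
    IsIdCode (cycleG n) r D ↔
      ((∀ i : ZMod n, i ∈ D ∨ i + ((2*r+1 : ℕ) : ZMod n) ∈ D) ∧
        ¬∃ i : ZMod n, ∀ j : ℕ, j < 2*r+1 → i + (j : ZMod n) ∉ D) :=
  stmt1' n r hr hn D
end

section
/- Let C_n be a cycle with n = 2r+1+q where 4 ≤ q ≤ r (so 2r+5 ≤ n ≤ 3r+1). Then D ⊆ V(C_n) is an r-identifying code if and only if (1) for every i ∈ {1,...,n}, x_i ∈ D or x_{i+q} ∈ D (indices mod n), and (2) there is at most one index i such that none of the q consecutive vertices x_{i+1}, x_{i+2}, ..., x_{i+q} belongs to D. -/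
lemma cyc_adj {n : ℕ} (h1 : (1 : ZMod n) ≠ 0) (x : ZMod n) : (cycleG n).Adj x (x + 1) := by
  rw [cycleG, SimpleGraph.fromRel_adj]
  constructor
  · intro h; apply h1; linear_combination -h
  · right; ring

lemma cyc_walk {n : ℕ} (h1 : (1 : ZMod n) ≠ 0) (x : ZMod n) (k : ℕ) :
    ∃ p : (cycleG n).Walk x (x + (k : ZMod n)), p.length ≤ k := by
  induction k with
  | zero => exact ⟨(SimpleGraph.Walk.nil).copy rfl (by simp), by simp⟩
  | succ k ih =>
    obtain ⟨p, hp⟩ := ih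
    have hadj : (cycleG n).Adj (x + (k : ZMod n)) (x + ((k+1 : ℕ) : ZMod n)) := by
      have h2 : x + ((k+1 : ℕ) : ZMod n) = (x + (k : ZMod n)) + 1 := by push_cast; ring
      rw [h2]; exact cyc_adj h1 _
    exact ⟨p.concat hadj, by simpa [SimpleGraph.Walk.length_concat] using Nat.succ_le_succ hp⟩

lemma cyc_walk_sub {n : ℕ} {x y : ZMod n} {L : ℕ} (p : (cycleG n).Walk x y) (hp : p.length ≤ L) :
    ∃ s : ℤ, s.natAbs ≤ L ∧ (s : ZMod n) = y - x := by
  induction p generalizing L with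
  | nil => exact ⟨0, by simp, by simp⟩
  | @cons a b c hab p ih =>
    have hL : 1 ≤ L := le_trans (by simp [SimpleGraph.Walk.length_cons]) hp
    obtain ⟨s, hs1, hs2⟩ := ih (L := L - 1) (by
      simp [SimpleGraph.Walk.length_cons] at hp; omega)
    rw [cycleG, SimpleGraph.fromRel_adj] at hab
    rcases hab.2 with h | h
    · refine ⟨s - 1, by omega, ?_⟩
      push_cast; linear_combination hs2 + h
    · refine ⟨s + 1, by omega, ?_⟩
      push_cast; linear_combination hs2 - h

lemma cyc_dist_le {n : ℕ} (h1 : (1 : ZMod n) ≠ 0) (x : ZMod n) (k : ℕ) :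
    (cycleG n).dist x (x + (k : ZMod n)) ≤ k := by
  obtain ⟨p, hp⟩ := cyc_walk h1 x k
  exact le_trans (SimpleGraph.dist_le p) hp

lemma cyc_reachable {n : ℕ} (h1 : (1 : ZMod n) ≠ 0) [NeZero n] (x y : ZMod n) :
    (cycleG n).Reachable x y := by
  obtain ⟨p, _⟩ := cyc_walk h1 x (y - x).val
  rw [ZMod.natCast_val, ZMod.cast_id] at p
  exact (p.copy rfl (by ring)).reachable

lemma cyc_dist_iff {n : ℕ} [NeZero n] (h1 : (1 : ZMod n) ≠ 0) (x y : ZMod n) (r : ℕ) :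
    (cycleG n).dist x y ≤ r ↔ (y - x).val ≤ r ∨ (x - y).val ≤ r := by
  constructor
  · intro h
    obtain ⟨p, hp⟩ := (cyc_reachable h1 x y).exists_walk_length_eq_dist
    obtain ⟨s, hs1, hs2⟩ := cyc_walk_sub p (le_of_eq hp)
    have hs1' : s.natAbs ≤ r := le_trans hs1 h
    rcases le_or_gt 0 s with hs | hs
    · left
      have hs' : ((s.toNat : ℕ) : ℤ) = s := Int.toNat_of_nonneg hs
      have hc := congrArg (fun t : ℤ => (t : ZMod n)) hs'
      push_cast at hc
      have : y - x = ((s.toNat : ℕ) : ZMod n) := by rw [← hs2, hc]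
      rw [this, ZMod.val_natCast]
      have := Nat.mod_le s.toNat n
      omega
    · right
      have hs' : ((s.natAbs : ℕ) : ℤ) = -s := by omega
      have hc := congrArg (fun t : ℤ => (t : ZMod n)) hs'
      push_cast at hc
      have : x - y = ((s.natAbs : ℕ) : ZMod n) := by
        rw [show x - y = -(y - x) by ring, ← hs2, ← hc, Int.abs_eq_natAbs, Int.cast_natCast]
      rw [this, ZMod.val_natCast]
      have := Nat.mod_le s.natAbs n
      omega
  · rintro (h | h)
    · have hy : y = x + (((y - x).val : ℕ) : ZMod n) := by
        rw [ZMod.natCast_val, ZMod.cast_id]; ring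
      calc (cycleG n).dist x y = (cycleG n).dist x (x + (((y-x).val : ℕ) : ZMod n)) := by rw [← hy]
        _ ≤ (y - x).val := cyc_dist_le h1 x _
        _ ≤ r := h
    · have hy : x = y + (((x - y).val : ℕ) : ZMod n) := by
        rw [ZMod.natCast_val, ZMod.cast_id]; ring
      rw [SimpleGraph.dist_comm]
      calc (cycleG n).dist y x = (cycleG n).dist y (y + (((x-y).val : ℕ) : ZMod n)) := by rw [← hy]
        _ ≤ (x - y).val := cyc_dist_le h1 y _
        _ ≤ r := h

lemma zadd_inj {n : ℕ} {x : ZMod n} {a b : ℕ} (h : x + (a : ZMod n) = x + (b : ZMod n)) :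
    a % n = b % n :=
  (ZMod.natCast_eq_natCast_iff' a b n).mp (by exact add_left_cancel h)

lemma zadd_eq {n : ℕ} (x : ZMod n) {a b : ℕ} (h : a % n = b % n) :
    x + (a : ZMod n) = x + (b : ZMod n) := by
  rw [(ZMod.natCast_eq_natCast_iff' a b n).mpr h]

lemma dist_le_of_eq {n : ℕ} (h1 : (1 : ZMod n) ≠ 0) {x y : ZMod n} {k : ℕ}
    (h : y = x + (k : ZMod n)) : (cycleG n).dist x y ≤ k := h ▸ cyc_dist_le h1 x k

section main
variable {r q : ℕ}

lemma cyc_one_ne_zero (hq1 : 4 ≤ q) (hq2 : q ≤ r) : (1 : ZMod (2*r+1+q)) ≠ 0 := by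
  have : ((1:ℕ) : ZMod (2*r+1+q)) ≠ ((0:ℕ) : ZMod (2*r+1+q)) := by
    rw [Ne, ZMod.natCast_eq_natCast_iff']
    have h1 : 1 % (2*r+1+q) = 1 := Nat.mod_eq_of_lt (by omega)
    have h0 : 0 % (2*r+1+q) = 0 := Nat.zero_mod _
    omega
  simpa using this

lemma out_iff (hq1 : 4 ≤ q) (hq2 : q ≤ r) (x y : ZMod (2*r+1+q)) :
    ¬ (cycleG (2*r+1+q)).dist x y ≤ r ↔
      ∃ j : ℕ, r+1 ≤ j ∧ j ≤ r+q ∧ y = x + (j : ZMod (2*r+1+q)) := by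
  haveI : NeZero (2*r+1+q) := ⟨by omega⟩
  rw [cyc_dist_iff (cyc_one_ne_zero hq1 hq2)]
  push_neg
  constructor
  · rintro ⟨hv, hw⟩
    have hvlt : (y - x).val < 2*r+1+q := ZMod.val_lt _
    have hxy : x - y = -(y - x) := by ring
    rw [hxy, ZMod.neg_val] at hw
    have hne : y - x ≠ 0 := by
      intro h0; rw [h0] at hw; simp at hw
    rw [if_neg hne] at hw
    refine ⟨(y - x).val, by omega, by omega, ?_⟩
    rw [ZMod.natCast_val, ZMod.cast_id]; ring
  · rintro ⟨j, hj1, hj2, rfl⟩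
    have hval : ((j : ZMod (2*r+1+q))).val = j := by
      rw [ZMod.val_natCast]; exact Nat.mod_eq_of_lt (by omega)
    have h1 : (x + (j:ZMod (2*r+1+q))) - x = (j : ZMod (2*r+1+q)) := by ring
    have h2 : x - (x + (j:ZMod (2*r+1+q))) = -(j : ZMod (2*r+1+q)) := by ring
    rw [h1, h2, ZMod.neg_val]
    have hne : (j : ZMod (2*r+1+q)) ≠ 0 := by
      intro h0
      have := (ZMod.val_eq_zero ((j:ℕ) : ZMod (2*r+1+q))).mpr h0
      omega
    rw [if_neg hne, hval]
    constructor <;> omega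

end main

section bigmain
variable {r q : ℕ}

lemma mem_Dr {V : Type*} {G : SimpleGraph V} {r : ℕ} {D : Set V} {x y : V} :
    y ∈ Dr G r D x ↔ y ∈ D ∧ G.dist x y ≤ r := Iff.rfl

lemma zadd_inj' {n : ℕ} {x : ZMod n} {a b : ℕ} (ha : a < n) (hb : b < n)
    (h : x + (a : ZMod n) = x + (b : ZMod n)) : a = b := by
  have := zadd_inj h
  rwa [Nat.mod_eq_of_lt ha, Nat.mod_eq_of_lt hb] at this

lemma zshift {n : ℕ} (x : ZMod n) {a b c : ℕ} (h : a + b = c) :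
    (x + (a : ZMod n)) + (b : ZMod n) = x + (c : ZMod n) := by
  rw [add_assoc, ← Nat.cast_add, h]

lemma zshift0 {n : ℕ} (x : ZMod n) {a : ℕ} (h : a = n) :
    x + (a : ZMod n) = x := by
  subst h; simp [ZMod.natCast_self]

lemma sepA (hq1 : 4 ≤ q) (hq2 : q ≤ r) (D : Set (ZMod (2*r+1+q)))
    (hc1 : ∀ i : ZMod (2*r+1+q), i ∈ D ∨ i + ((q : ℕ) : ZMod (2*r+1+q)) ∈ D)
    {x y : ZMod (2*r+1+q)} (ht1 : 1 ≤ (y - x).val) (ht2 : (y - x).val ≤ q) :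
    Dr (cycleG (2*r+1+q)) r D x ≠ Dr (cycleG (2*r+1+q)) r D y := by
  haveI : NeZero (2*r+1+q) := ⟨by omega⟩
  have h1 := cyc_one_ne_zero hq1 hq2
  intro heq
  have hy : y = x + (((y - x).val : ℕ) : ZMod (2*r+1+q)) := by
    rw [ZMod.natCast_val, ZMod.cast_id]; ring
  set t := (y - x).val with htdef
  rcases hc1 (x + ((r+1 : ℕ) : ZMod (2*r+1+q))) with hD | hD
  · have hnx : x + ((r+1 : ℕ) : ZMod (2*r+1+q)) ∉ Dr (cycleG (2*r+1+q)) r D x := by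
      intro hmem
      exact (out_iff hq1 hq2 x _).mpr ⟨r+1, le_refl _, by omega, rfl⟩ hmem.2
    have hmy : x + ((r+1 : ℕ) : ZMod (2*r+1+q)) ∈ Dr (cycleG (2*r+1+q)) r D y := by
      refine ⟨hD, ?_⟩
      have hkey : x + ((r+1 : ℕ) : ZMod (2*r+1+q)) = y + ((r+1-t : ℕ) : ZMod (2*r+1+q)) := by
        rw [hy, zshift x (show t + (r+1-t) = r+1 by omega)]
      exact le_trans (dist_le_of_eq h1 hkey) (by omega)
    rw [heq] at hnx; exact hnx hmy
  · rw [zshift x (show (r+1) + q = r+1+q by omega)] at hD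
    have hmx : x + ((r+1+q : ℕ) : ZMod (2*r+1+q)) ∈ Dr (cycleG (2*r+1+q)) r D x := by
      refine ⟨hD, ?_⟩
      rw [SimpleGraph.dist_comm]
      have hkey : x = (x + ((r+1+q : ℕ) : ZMod (2*r+1+q))) + ((r : ℕ) : ZMod (2*r+1+q)) := by
        rw [zshift x (show (r+1+q) + r = 2*r+1+q by omega), zshift0 x rfl]
      exact dist_le_of_eq h1 hkey
    have hny : x + ((r+1+q : ℕ) : ZMod (2*r+1+q)) ∉ Dr (cycleG (2*r+1+q)) r D y := by
      intro hmem
      refine (out_iff hq1 hq2 y _).mpr ⟨r+1+q-t, by omega, by omega, ?_⟩ hmem.2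
      rw [hy, zshift x (show t + (r+1+q-t) = r+1+q by omega)]
    rw [heq] at hmx; exact hny hmx

end bigmain

section bigmain2
variable {r q : ℕ}

lemma mod_cases {n a b : ℕ} (h : a % n = b % n) (ha : a < 2 * n) (hb : b < n) :
    a = b ∨ a = b + n := by
  rcases Nat.lt_or_ge a n with h' | h'
  · left; rwa [Nat.mod_eq_of_lt h', Nat.mod_eq_of_lt hb] at h
  · right
    have h2 : a % n = a - n := by
      rw [Nat.mod_eq_sub_mod h', Nat.mod_eq_of_lt (by omega)]
    rw [h2, Nat.mod_eq_of_lt hb] at h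
    omega

lemma winE (hq1 : 4 ≤ q) (hq2 : q ≤ r) (D : Set (ZMod (2*r+1+q))) {x : ZMod (2*r+1+q)}
    (hE : ∀ j : ℕ, 1 ≤ j → j ≤ q → (x + ((r:ℕ) : ZMod (2*r+1+q))) + (j : ZMod (2*r+1+q)) ∉ D) :
    Dr (cycleG (2*r+1+q)) r D x = D := by
  ext y
  simp only [mem_Dr]
  constructor
  · exact fun h => h.1
  · intro hyD
    refine ⟨hyD, ?_⟩
    by_contra hout
    obtain ⟨j, hj1, hj2, rfl⟩ := (out_iff hq1 hq2 x y).mp hout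
    refine hE (j - r) (by omega) (by omega) ?_
    rwa [zshift x (show r + (j - r) = j by omega)]

theorem stmt3' (hq1 : 4 ≤ q) (hq2 : q ≤ r)
    (D : Set (ZMod (2*r+1+q))) :
    IsIdCode (cycleG (2*r+1+q)) r D ↔
      ((∀ i : ZMod (2*r+1+q), i ∈ D ∨ i + ((q : ℕ) : ZMod (2*r+1+q)) ∈ D) ∧
        {i : ZMod (2*r+1+q) |
          ∀ j : ℕ, 1 ≤ j → j ≤ q → i + (j : ZMod (2*r+1+q)) ∉ D}.Subsingleton) := by
  haveI : NeZero (2*r+1+q) := ⟨by omega⟩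
  have h1 := cyc_one_ne_zero hq1 hq2
  constructor
  · rintro ⟨hnem, hsep⟩
    constructor
    · -- condition (1)
      intro i
      by_contra hcon
      push_neg at hcon
      obtain ⟨hi1, hi2⟩ := hcon
      set x := i - ((r+1 : ℕ) : ZMod (2*r+1+q)) with hxdef
      have hxi : x + ((r+1 : ℕ) : ZMod (2*r+1+q)) = i := by rw [hxdef]; ring
      refine hsep x (x + ((1:ℕ) : ZMod (2*r+1+q)))
        (by intro h; exact h1 (by push_cast at h; linear_combination -h)) ?_
      ext y
      simp only [mem_Dr]
      constructor
      · rintro ⟨hyD, hyd⟩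
        refine ⟨hyD, ?_⟩
        by_contra hout
        obtain ⟨j, hj1, hj2, hyeq⟩ := (out_iff hq1 hq2 _ y).mp hout
        rw [zshift x (show 1 + j = j+1 by omega)] at hyeq
        rcases Nat.lt_or_ge j (r+q) with hj | hj
        · exact (out_iff hq1 hq2 x y).mpr ⟨j+1, by omega, by omega, hyeq⟩ hyd
        · -- j = r+q, y = x + (r+q+1) = i + q
          apply hi2
          have : i + ((q : ℕ) : ZMod (2*r+1+q)) = x + ((j+1 : ℕ) : ZMod (2*r+1+q)) := by
            rw [← hxi, zshift x (show (r+1) + q = j+1 by omega)]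
          rw [this, ← hyeq]; exact hyD
      · rintro ⟨hyD, hyd⟩
        refine ⟨hyD, ?_⟩
        by_contra hout
        obtain ⟨j, hj1, hj2, hyeq⟩ := (out_iff hq1 hq2 x y).mp hout
        rcases Nat.lt_or_ge (r+1) j with hj | hj
        · refine (out_iff hq1 hq2 _ y).mpr ⟨j-1, by omega, by omega, ?_⟩ hyd
          rw [zshift x (show 1 + (j-1) = j by omega)]; exact hyeq
        · -- j = r+1, y = i
          apply hi1
          have hji : j = r+1 := by omega
          rw [← hxi, ← hji, ← hyeq]; exact hyD
    · -- condition (2)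
      intro i1 h1E i2 h2E
      by_contra hne12
      refine hsep (i1 - ((r:ℕ) : ZMod (2*r+1+q))) (i2 - ((r:ℕ) : ZMod (2*r+1+q)))
        (by intro h; exact hne12 (by linear_combination h)) ?_
      have e1 : i1 - ((r:ℕ) : ZMod (2*r+1+q)) + ((r:ℕ) : ZMod (2*r+1+q)) = i1 := by ring
      have e2 : i2 - ((r:ℕ) : ZMod (2*r+1+q)) + ((r:ℕ) : ZMod (2*r+1+q)) = i2 := by ring
      rw [winE hq1 hq2 D (fun j hj1 hj2 => by rw [e1]; exact h1E j hj1 hj2),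
          winE hq1 hq2 D (fun j hj1 hj2 => by rw [e2]; exact h2E j hj1 hj2)]
  · rintro ⟨hc1, hc2⟩
    constructor
    · -- nonempty
      intro x
      by_contra hemp
      rw [Set.not_nonempty_iff_eq_empty] at hemp
      have hout : ∀ y ∈ D, ∃ j : ℕ, r+1 ≤ j ∧ j ≤ r+q ∧ y = x + (j : ZMod (2*r+1+q)) := by
        intro y hyD
        refine (out_iff hq1 hq2 x y).mp ?_
        intro hd
        have : y ∈ Dr (cycleG (2*r+1+q)) r D x := ⟨hyD, hd⟩
        rw [hemp] at this; exact this
      have hE1 : (x + ((r+q : ℕ) : ZMod (2*r+1+q))) ∈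
          {i : ZMod (2*r+1+q) | ∀ j : ℕ, 1 ≤ j → j ≤ q → i + (j : ZMod (2*r+1+q)) ∉ D} := by
        intro j hj1 hjq hmemD
        rw [zshift x (show (r+q) + j = r+q+j by omega)] at hmemD
        obtain ⟨j', hj'1, hj'2, heq⟩ := hout _ hmemD
        have := mod_cases (zadd_inj heq) (by omega) (by omega)
        omega
      have hE2 : (x + ((r+q+1 : ℕ) : ZMod (2*r+1+q))) ∈
          {i : ZMod (2*r+1+q) | ∀ j : ℕ, 1 ≤ j → j ≤ q → i + (j : ZMod (2*r+1+q)) ∉ D} := by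
        intro j hj1 hjq hmemD
        rw [zshift x (show (r+q+1) + j = r+q+1+j by omega)] at hmemD
        obtain ⟨j', hj'1, hj'2, heq⟩ := hout _ hmemD
        have := mod_cases (zadd_inj heq) (by omega) (by omega)
        omega
      have := hc2 hE1 hE2
      have := zadd_inj' (n := 2*r+1+q) (by omega) (by omega) this
      omega
    · -- distinctness
      intro x y hxy heq
      have ht0 : (y - x).val ≠ 0 := by
        intro h
        exact hxy (by linear_combination ((ZMod.val_eq_zero (y-x)).mp h).symm)
      have htn : (y - x).val < 2*r+1+q := ZMod.val_lt _
      have hy : y = x + (((y - x).val : ℕ) : ZMod (2*r+1+q)) := by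
        rw [ZMod.natCast_val, ZMod.cast_id]; ring
      set t := (y - x).val with htdef
      rcases le_or_gt t q with hcase | hcase
      · exact sepA hq1 hq2 D hc1 (by omega) hcase heq
      rcases le_or_gt (2*r+1) t with hcase2 | hcase2
      · have hyx : (x - y).val = 2*r+1+q - t := by
          rw [show x - y = -(y - x) by ring, ZMod.neg_val,
            if_neg (fun h => ht0 ((ZMod.val_eq_zero (y-x)).mpr h))]
        exact sepA hq1 hq2 D hc1 (by omega) (by omega) heq.symm
      · -- middle case
        have hE1 : (x + ((r : ℕ) : ZMod (2*r+1+q))) ∈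
            {i : ZMod (2*r+1+q) | ∀ j : ℕ, 1 ≤ j → j ≤ q → i + (j : ZMod (2*r+1+q)) ∉ D} := by
          intro j hj1 hjq hmemD
          rw [zshift x (show r + j = r+j by omega)] at hmemD
          have hzx : x + ((r+j : ℕ) : ZMod (2*r+1+q)) ∉ Dr (cycleG (2*r+1+q)) r D x :=
            fun hm => (out_iff hq1 hq2 x _).mpr ⟨r+j, by omega, by omega, rfl⟩ hm.2
          have hzy : x + ((r+j : ℕ) : ZMod (2*r+1+q)) ∈ Dr (cycleG (2*r+1+q)) r D y := by
            refine ⟨hmemD, ?_⟩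
            rcases le_or_gt t (r+j) with hc | hc
            · have hkey : x + ((r+j : ℕ) : ZMod (2*r+1+q))
                  = y + ((r+j-t : ℕ) : ZMod (2*r+1+q)) := by
                rw [hy, zshift x (show t + (r+j-t) = r+j by omega)]
              exact le_trans (dist_le_of_eq h1 hkey) (by omega)
            · rw [SimpleGraph.dist_comm]
              have hkey : y = (x + ((r+j : ℕ) : ZMod (2*r+1+q)))
                  + ((t-(r+j) : ℕ) : ZMod (2*r+1+q)) := by
                rw [zshift x (show (r+j) + (t-(r+j)) = t by omega), ← hy]
              exact le_trans (dist_le_of_eq h1 hkey) (by omega)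
          rw [← heq] at hzy
          exact hzx hzy
        have hE2 : (y + ((r : ℕ) : ZMod (2*r+1+q))) ∈
            {i : ZMod (2*r+1+q) | ∀ j : ℕ, 1 ≤ j → j ≤ q → i + (j : ZMod (2*r+1+q)) ∉ D} := by
          intro j hj1 hjq hmemD
          rw [zshift y (show r + j = r+j by omega)] at hmemD
          have hwy : y + ((r+j : ℕ) : ZMod (2*r+1+q)) ∉ Dr (cycleG (2*r+1+q)) r D y :=
            fun hm => (out_iff hq1 hq2 y _).mpr ⟨r+j, by omega, by omega, rfl⟩ hm.2
          have hwx : y + ((r+j : ℕ) : ZMod (2*r+1+q)) ∈ Dr (cycleG (2*r+1+q)) r D x := by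
            refine ⟨hmemD, ?_⟩
            have hweq : y + ((r+j : ℕ) : ZMod (2*r+1+q))
                = x + ((t+r+j : ℕ) : ZMod (2*r+1+q)) := by
              rw [hy, zshift x (show t + (r+j) = t+r+j by omega)]
            rcases Nat.lt_or_ge (t+r+j) (2*r+1+q) with hc | hc
            · rw [SimpleGraph.dist_comm]
              have hkey : x = (y + ((r+j : ℕ) : ZMod (2*r+1+q)))
                  + ((2*r+1+q-(t+r+j) : ℕ) : ZMod (2*r+1+q)) := by
                rw [hweq, zshift x (show (t+r+j) + (2*r+1+q-(t+r+j)) = 2*r+1+q by omega),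
                  zshift0 x rfl]
              exact le_trans (dist_le_of_eq h1 hkey) (by omega)
            · have hkey : y + ((r+j : ℕ) : ZMod (2*r+1+q))
                  = x + ((t+r+j-(2*r+1+q) : ℕ) : ZMod (2*r+1+q)) := by
                obtain ⟨o, ho⟩ : ∃ o, t+r+j-(2*r+1+q) = o := ⟨_, rfl⟩
                rw [hweq, ho, show t+r+j = o + (2*r+1+q) by omega,
                  Nat.cast_add, ZMod.natCast_self, add_zero]
              exact le_trans (dist_le_of_eq h1 hkey) (by omega)
          rw [heq] at hwx
          exact hwy hwx
        have := hc2 hE1 hE2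
        exact hxy (by linear_combination this)

end bigmain2


theorem stmt3 (r q : ℕ) (hq1 : 4 ≤ q) (hq2 : q ≤ r)
    (D : Set (ZMod (2*r+1+q))) :
    IsIdCode (cycleG (2*r+1+q)) r D ↔
      ((∀ i : ZMod (2*r+1+q), i ∈ D ∨ i + ((q : ℕ) : ZMod (2*r+1+q)) ∈ D) ∧
        {i : ZMod (2*r+1+q) |
          ∀ j : ℕ, 1 ≤ j → j ≤ q → i + (j : ZMod (2*r+1+q)) ∉ D}.Subsingleton) :=
  stmt3' hq1 hq2 D
end

section
/- Let n = 2k+1 with n ≥ 4r+2, k = (2r+1)p + q, p ≥ 1, gcd(2r+1, 2k+1) = 1, and q ∈ {1,...,2r-1} with q ∉ {0, r, 2r}. Then the minimum size of an r-identifying code in the cycle C_{2k+1} is k+1. -/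
set_option linter.unusedSectionVars false
set_option linter.unusedVariables false
set_option linter.unusedTactic false

namespace StmtSixAux

section dist

variable {n : ℕ} [Fact (1 < n)]

lemma adj_succ (x : ZMod n) : (cycleG n).Adj x (x + 1) := by
  rw [cycleG, SimpleGraph.fromRel_adj]
  constructor
  · intro h
    have : (1 : ZMod n) = 0 := by
      have := h.symm
      rwa [add_eq_left] at this
    exact one_ne_zero this
  · right; ring

lemma adj_pred (x : ZMod n) : (cycleG n).Adj x (x - 1) := by
  have := (adj_succ (x - 1)).symm
  simpa using this

lemma walk_add (a : ℕ) : ∀ x y : ZMod n, y = x + (a : ℕ) →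
    ∃ p : (cycleG n).Walk x y, p.length = a := by
  induction a with
  | zero =>
    intro x y h
    have : y = x := by simpa using h
    subst this
    exact ⟨SimpleGraph.Walk.nil, rfl⟩
  | succ a ih =>
    intro x y h
    obtain ⟨p, hp⟩ := ih x (x + (a : ℕ)) rfl
    have hadj : (cycleG n).Adj (x + (a : ℕ)) y := by
      have : y = (x + (a:ℕ)) + 1 := by rw [h]; push_cast; ring
      rw [this]; exact adj_succ _
    exact ⟨p.concat hadj, by simp [hp]⟩

lemma walk_sub (a : ℕ) : ∀ x y : ZMod n, y = x - (a : ℕ) →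
    ∃ p : (cycleG n).Walk x y, p.length = a := by
  induction a with
  | zero =>
    intro x y h
    have : y = x := by simpa using h
    subst this
    exact ⟨SimpleGraph.Walk.nil, rfl⟩
  | succ a ih =>
    intro x y h
    obtain ⟨p, hp⟩ := ih x (x - (a : ℕ)) rfl
    have hadj : (cycleG n).Adj (x - (a : ℕ)) y := by
      have : y = (x - (a:ℕ)) - 1 := by rw [h]; push_cast; ring
      rw [this]; exact adj_pred _
    exact ⟨p.concat hadj, by simp [hp]⟩

lemma dist_le_of_eq_add (x y : ZMod n) (j : ℤ) (h : y = x + (j : ℤ)) :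
    (cycleG n).dist x y ≤ j.natAbs := by
  rcases Int.natAbs_eq j with hj | hj
  · obtain ⟨p, hp⟩ := walk_add j.natAbs x y (by rw [h, hj, Int.cast_natCast, Int.natAbs_natCast])
    exact hp ▸ SimpleGraph.dist_le p
  · obtain ⟨p, hp⟩ := walk_sub j.natAbs x y (by rw [h, hj, Int.cast_neg, Int.cast_natCast, Int.natAbs_neg, Int.natAbs_natCast, sub_eq_add_neg])
    exact hp ▸ SimpleGraph.dist_le p

lemma exists_int_of_walk {x y : ZMod n} (p : (cycleG n).Walk x y) :
    ∃ j : ℤ, j.natAbs ≤ p.length ∧ y = x + (j : ℤ) := by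
  induction p with
  | nil => exact ⟨0, by simp, by simp⟩
  | @cons u v w h p ih =>
    obtain ⟨j, hj, hy⟩ := ih
    rw [cycleG, SimpleGraph.fromRel_adj] at h
    simp only [SimpleGraph.Walk.length_cons]
    rcases h.2 with h1 | h1
    · refine ⟨j - 1, by omega, ?_⟩
      have hv : v = u - 1 := by linear_combination -h1
      rw [hy, hv]; push_cast; ring
    · refine ⟨j + 1, by omega, ?_⟩
      have hv : v = u + 1 := by linear_combination h1
      rw [hy, hv]; push_cast; ring

lemma cyc_reachable (x y : ZMod n) : (cycleG n).Reachable x y := by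
  obtain ⟨p, -⟩ := walk_add (y - x).val x y (by rw [ZMod.natCast_val, ZMod.cast_id]; ring)
  exact ⟨p⟩

lemma dist_le_iff {r : ℕ} (x y : ZMod n) :
    (cycleG n).dist x y ≤ r ↔ ∃ j : ℤ, j.natAbs ≤ r ∧ y = x + (j : ℤ) := by
  constructor
  · intro h
    obtain ⟨p, hp⟩ := (cyc_reachable x y).exists_walk_length_eq_dist
    obtain ⟨j, hj, hy⟩ := exists_int_of_walk p
    exact ⟨j, by omega, hy⟩
  · rintro ⟨j, hj, hy⟩
    exact le_trans (dist_le_of_eq_add x y j hy) hj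


end dist

section arith


-- helper
lemma int_eq_of_dvd_small {s a : ℤ} (hs : 0 < s) (h : s ∣ a) (h1 : -s < a) (h2 : a < s) :
    a = 0 := by
  rcases h with ⟨t, rfl⟩
  rcases lt_trichotomy t 0 with ht | ht | ht
  · nlinarith
  · simp [ht]
  · nlinarith

variable {r q k p : ℕ}

/-- the code -/
def codeSet (r k : ℕ) : Set (ZMod (2*k+1)) :=
  {z | ∃ i : ℕ, i ≤ k ∧ z = ((i*(4*r+2) : ℕ) : ZMod (2*k+1))}

lemma coprime_s (hg : Nat.gcd (2*r+1) (2*k+1) = 1) : Nat.Coprime (4*r+2) (2*k+1) := by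
  have h2 : Nat.Coprime 2 (2*k+1) :=
    (Nat.prime_two.coprime_iff_not_dvd).mpr (by omega)
  have h3 : Nat.Coprime (2*(2*r+1)) (2*k+1) := Nat.Coprime.mul h2 hg
  have h4 : 4*r+2 = 2*(2*r+1) := by ring
  rw [Nat.Coprime, h4]
  exact h3

lemma coprime_c (hg : Nat.gcd (2*r+1) (2*k+1) = 1) (hk : k = (2*r+1)*p + q) :
    Nat.Coprime (2*r+1) (2*q+1) := by
  have hn : 2*k+1 = (2*q+1) + (2*p)*(2*r+1) := by rw [hk]; ring
  have := (Nat.coprime_add_mul_right_right (2*r+1) (2*q+1) (2*p)).mp (by rw [← hn]; exact hg)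
  exact this

-- membership criterion
lemma mem_code_iff (v : ℕ) (hv : v < 2*k+1) :
    ((v : ℕ) : ZMod (2*k+1)) ∈ codeSet r k ↔
      ∃ l : ℕ, l ≤ 2*r ∧ (4*r+2) ∣ (l*(2*k+1) + v) := by
  haveI : NeZero (2*k+1) := ⟨by omega⟩
  constructor
  · rintro ⟨i, hi, hz⟩
    have hmod : v ≡ i*(4*r+2) [MOD 2*k+1] := (ZMod.natCast_eq_natCast_iff _ _ _).mp hz
    have hvv : v % (2*k+1) = v := Nat.mod_eq_of_lt hv
    have hmm : (i*(4*r+2)) % (2*k+1) = v := by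
      have := hmod.symm
      unfold Nat.ModEq at this
      rw [this, hvv]
    refine ⟨(i*(4*r+2)) / (2*k+1), ?_, ?_⟩
    · -- l ≤ 2r
      have hdm := Nat.div_add_mod (i*(4*r+2)) (2*k+1)
      have h3 : i*(4*r+2) ≤ k*(4*r+2) := Nat.mul_le_mul_right _ hi
      have h4 : k*(4*r+2) < (2*k+1)*(2*r+1) := by nlinarith
      have h5 : (2*k+1) * ((i*(4*r+2)) / (2*k+1)) < (2*k+1)*(2*r+1) := by
        rw [hmm] at hdm
        linarith
      have := Nat.lt_of_mul_lt_mul_left h5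
      omega
    · refine ⟨i, ?_⟩
      have hdm := Nat.div_add_mod (i*(4*r+2)) (2*k+1)
      rw [hmm] at hdm
      linarith [hdm]
  · rintro ⟨l, hl, m, hm⟩
    refine ⟨m, ?_, ?_⟩
    · -- m ≤ k
      have h1 : l*(2*k+1) + v < (2*r+1)*(2*k+1) := by nlinarith
      have h2 : (4*r+2)*m < (4*r+2)*(k+1) := by nlinarith
      have := Nat.lt_of_mul_lt_mul_left h2
      omega
    · refine Eq.symm ?_
      calc ((m*(4*r+2) : ℕ) : ZMod (2*k+1)) = ((l*(2*k+1) + v : ℕ) : ZMod (2*k+1)) := by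
            rw [mul_comm m, ← hm]
        _ = ((v:ℕ) : ZMod (2*k+1)) := by
            rw [Nat.cast_add, Nat.cast_mul, ZMod.natCast_self, mul_zero, zero_add]

-- gamma
lemma exists_gamma (hr : 1 ≤ r) (hq1 : 1 ≤ q) (hq2 : q ≤ 2*r-1)
    (hg : Nat.gcd (2*r+1) (2*k+1) = 1) (hk : k = (2*r+1)*p + q) :
    ∃ g : ℕ, g % 2 = 1 ∧ 3 ≤ g ∧ g ≤ 4*r-1 ∧ g ≠ 2*r+1 ∧ (2*r+1) ∣ (g*(2*q+1) + 1) := by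
  have hc := coprime_c hg hk
  haveI : NeZero (2*r+1) := ⟨by omega⟩
  haveI : Fact (1 < 2*r+1) := ⟨by omega⟩
  set c : ZMod (2*r+1) := ((2*q+1 : ℕ) : ZMod (2*r+1)) with hcdef
  have hcu : IsUnit c := ⟨ZMod.unitOfCoprime (2*q+1) hc.symm, ZMod.coe_unitOfCoprime _ _⟩
  set u : ℕ := (-c⁻¹).val with hudef
  have hval : ((u : ℕ) : ZMod (2*r+1)) = -c⁻¹ := by
    rw [hudef, ZMod.natCast_val, ZMod.cast_id]
  have hu_lt : u < 2*r+1 := ZMod.val_lt _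
  have hdvd0 : (2*r+1) ∣ u*(2*q+1) + 1 := by
    have : ((u*(2*q+1) + 1 : ℕ) : ZMod (2*r+1)) = 0 := by
      rw [Nat.cast_add, Nat.cast_mul, Nat.cast_one, hval, ← hcdef]
      have h2 : c⁻¹ * c = 1 := by
        have h3 := ZMod.mul_inv_of_unit c hcu
        linear_combination h3
      calc -c⁻¹ * c + 1 = -(c⁻¹ * c) + 1 := by ring
        _ = 0 := by rw [h2]; ring
    exact (ZMod.natCast_eq_zero_iff _ _).mp this
  -- parity adjust
  set g : ℕ := if u % 2 = 1 then u else u + (2*r+1) with hgdef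
  have hgodd : g % 2 = 1 := by
    rw [hgdef]
    split <;> omega
  have hgd : (2*r+1) ∣ g*(2*q+1) + 1 := by
    rw [hgdef]
    split
    · exact hdvd0
    · have : (u + (2*r+1))*(2*q+1) + 1 = (u*(2*q+1) + 1) + (2*r+1)*(2*q+1) := by ring
      rw [this]
      exact Nat.dvd_add hdvd0 ⟨2*q+1, rfl⟩
  have hg_le : g ≤ 4*r+1 := by rw [hgdef]; split <;> omega
  have hg_ne_mid : g ≠ 2*r+1 := by
    intro h
    rw [h] at hgd
    have h1 : (2*r+1) ∣ 1 := (Nat.dvd_add_right ⟨2*q+1, by ring⟩).mp hgd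
    have := Nat.le_of_dvd one_pos h1
    omega
  have hg_ne_one : g ≠ 1 := by
    intro h
    rw [h, one_mul] at hgd
    obtain ⟨t, ht⟩ := hgd
    rcases Nat.lt_or_ge t 2 with h2 | h2
    · interval_cases t <;> omega
    · have : (2*r+1)*2 ≤ (2*r+1)*t := Nat.mul_le_mul_left _ h2
      omega
  have hg_ne_top : g ≠ 4*r+1 := by
    intro h
    rw [h] at hgd
    have key : (4*r+1)*(2*q+1) + 1 + 2*q = (2*r+1)*(2*(2*q+1)) := by ring
    have hd2 : (2*r+1) ∣ (4*r+1)*(2*q+1) + 1 + 2*q := by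
      rw [key]; exact ⟨2*(2*q+1), rfl⟩
    have : (2*r+1) ∣ 2*q := (Nat.dvd_add_right hgd).mp hd2
    obtain ⟨t, ht⟩ := this
    rcases Nat.lt_or_ge t 2 with h2 | h2
    · interval_cases t <;> omega
    · have : (2*r+1)*2 ≤ (2*r+1)*t := Nat.mul_le_mul_left _ h2
      omega
  have hg_pos : 1 ≤ g := by
    rw [hgdef]
    split
    · omega
    · omega
  exact ⟨g, hgodd, by omega, by omega, hg_ne_mid, hgd⟩

lemma lam_unique (hg : Nat.gcd (2*r+1) (2*k+1) = 1) (v l l' : ℕ)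
    (hl : l < 4*r+2) (hl' : l' < 4*r+2)
    (d : (4*r+2) ∣ (l*(2*k+1) + v)) (d' : (4*r+2) ∣ (l'*(2*k+1) + v)) : l = l' := by
  have hcop : IsCoprime ((4*r+2 : ℕ) : ℤ) ((2*k+1 : ℕ) : ℤ) :=
    Nat.isCoprime_iff_coprime.mpr (coprime_s hg)
  have dz : ((4*r+2 : ℕ) : ℤ) ∣ ((l : ℤ) - l') * ((2*k+1 : ℕ) : ℤ) := by
    have d1 : ((4*r+2 : ℕ) : ℤ) ∣ ((l*(2*k+1) + v : ℕ) : ℤ) := Int.natCast_dvd_natCast.mpr d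
    have d2 : ((4*r+2 : ℕ) : ℤ) ∣ ((l'*(2*k+1) + v : ℕ) : ℤ) := Int.natCast_dvd_natCast.mpr d'
    have h3 : ((l : ℤ) - l') * ((2*k+1 : ℕ) : ℤ)
        = ((l*(2*k+1) + v : ℕ) : ℤ) - ((l'*(2*k+1) + v : ℕ) : ℤ) := by push_cast; ring
    rw [h3]
    exact dvd_sub d1 d2
  have := hcop.dvd_of_dvd_mul_right dz
  have hz : ((l : ℤ) - l') = 0 := by
    apply int_eq_of_dvd_small (s := ((4*r+2 : ℕ) : ℤ)) (by push_cast; omega) this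
    · push_cast; omega
    · push_cast; omega
  omega

lemma pos_nec (hr : 1 ≤ r) (hg : Nat.gcd (2*r+1) (2*k+1) = 1) (hk : k = (2*r+1)*p + q)
    (g : ℕ) (hgodd : g % 2 = 1) (hgd : (2*r+1) ∣ (g*(2*q+1) + 1))
    (v : ℕ) (hv : v < 2*k+1) (hmem : ((v:ℕ) : ZMod (2*k+1)) ∈ codeSet r k) :
    (v*g) % (4*r+2) ≤ 2*r := by
  obtain ⟨l, hl, hld⟩ := (mem_code_iff v hv).mp hmem
  set L : ℕ := (v*g) % (4*r+2) with hLdef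
  have hLlt : L < 4*r+2 := Nat.mod_lt _ (by omega)
  -- show (4r+2) ∣ L*(2k+1) + v
  have hbase : (L : ℤ) ≡ (v*g : ℕ) [ZMOD ((4*r+2 : ℕ) : ℤ)] := by
    have hnm : (v*g) % (4*r+2) ≡ v*g [MOD 4*r+2] := Nat.mod_modEq _ _
    have := hnm.dvd
    exact Int.modEq_iff_dvd.mpr (by exact_mod_cast this)
  have hL2 : (L : ℤ) ≡ (v*g : ℕ) [ZMOD 2] :=
    hbase.of_dvd (by push_cast; exact ⟨(2*r+1 : ℤ), by ring⟩)
  have hLr : (L : ℤ) ≡ (v*g : ℕ) [ZMOD ((2*r+1 : ℕ) : ℤ)] :=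
    hbase.of_dvd (by push_cast; exact ⟨2, by ring⟩)
  have hn2 : ((2*k+1 : ℕ) : ℤ) ≡ 1 [ZMOD 2] := Int.modEq_iff_dvd.mpr (by push_cast; omega)
  have hnr : ((2*k+1 : ℕ) : ℤ) ≡ ((2*q+1 : ℕ) : ℤ) [ZMOD ((2*r+1 : ℕ) : ℤ)] := by
    refine Int.modEq_iff_dvd.mpr ⟨-(2*p : ℤ), ?_⟩
    rw [hk]; push_cast; ring
  have div2 : (2 : ℤ) ∣ ((L : ℤ)*((2*k+1 : ℕ) : ℤ) + v) := by
    have step : (L : ℤ)*((2*k+1 : ℕ) : ℤ) + v ≡ ((v*g : ℕ) : ℤ)*1 + v [ZMOD 2] :=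
      (hL2.mul hn2).add_right _
    have hrhs : (2:ℤ) ∣ ((v*g : ℕ) : ℤ)*1 + v := by
      have : ((v*g : ℕ) : ℤ)*1 + v = (v : ℤ)*(g+1) := by push_cast; ring
      rw [this]
      have : (2:ℤ) ∣ ((g : ℤ)+1) := by omega
      exact Dvd.dvd.mul_left this _
    exact Int.modEq_zero_iff_dvd.mp (step.trans (Int.modEq_zero_iff_dvd.mpr hrhs))
  have divr : ((2*r+1 : ℕ) : ℤ) ∣ ((L : ℤ)*((2*k+1 : ℕ) : ℤ) + v) := by
    have step : (L : ℤ)*((2*k+1 : ℕ) : ℤ) + v ≡ ((v*g : ℕ) : ℤ)*((2*q+1:ℕ):ℤ) + v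
        [ZMOD ((2*r+1 : ℕ) : ℤ)] := (hLr.mul hnr).add_right _
    have hrhs : ((2*r+1 : ℕ) : ℤ) ∣ ((v*g : ℕ) : ℤ)*((2*q+1:ℕ):ℤ) + v := by
      have heq : ((v*g : ℕ) : ℤ)*((2*q+1:ℕ):ℤ) + v = (v : ℤ) * ((g*(2*q+1) + 1 : ℕ) : ℤ) := by
        push_cast; ring
      rw [heq]
      exact Dvd.dvd.mul_left (Int.natCast_dvd_natCast.mpr hgd) _
    exact Int.modEq_zero_iff_dvd.mp (step.trans (Int.modEq_zero_iff_dvd.mpr hrhs))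
  have hdivs : (4*r+2 : ℕ) ∣ (L*(2*k+1) + v) := by
    have hcop2 : IsCoprime (2 : ℤ) ((2*r+1 : ℕ) : ℤ) := by
      have : Nat.Coprime 2 (2*r+1) := (Nat.prime_two.coprime_iff_not_dvd).mpr (by omega)
      exact_mod_cast Nat.isCoprime_iff_coprime.mpr this
    have hmul : (2 * ((2*r+1 : ℕ) : ℤ)) ∣ ((L : ℤ)*((2*k+1 : ℕ) : ℤ) + v) :=
      hcop2.mul_dvd div2 divr
    have h4 : ((4*r+2 : ℕ) : ℤ) = 2 * ((2*r+1 : ℕ) : ℤ) := by push_cast; ring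
    have : ((4*r+2 : ℕ) : ℤ) ∣ (((L*(2*k+1) + v : ℕ)) : ℤ) := by
      have h5 : ((L*(2*k+1) + v : ℕ) : ℤ) = (L : ℤ)*((2*k+1 : ℕ) : ℤ) + ↑v := by push_cast; ring
      rw [h4, h5]
      exact hmul
    exact_mod_cast this
  have := lam_unique hg v L l hLlt (by omega) hdivs hld
  omega

lemma coprime_g (g : ℕ) (hgd : (2*r+1) ∣ (g*(2*q+1) + 1)) : Nat.Coprime (2*r+1) g := by
  have h1 : Nat.gcd (2*r+1) g ∣ g*(2*q+1) := Dvd.dvd.mul_right (Nat.gcd_dvd_right _ _) _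
  have h2 : Nat.gcd (2*r+1) g ∣ g*(2*q+1) + 1 := dvd_trans (Nat.gcd_dvd_left _ _) hgd
  have h3 : Nat.gcd (2*r+1) g ∣ 1 := (Nat.dvd_add_right h1).mp h2
  exact Nat.eq_one_of_dvd_one h3

lemma neg_nec (hr : 1 ≤ r) (hg : Nat.gcd (2*r+1) (2*k+1) = 1) (hk : k = (2*r+1)*p + q)
    (hklb : 2*r+2 ≤ k)
    (g : ℕ) (hgodd : g % 2 = 1) (hg3 : 3 ≤ g) (hgtop : g ≤ 4*r-1)
    (hgd : (2*r+1) ∣ (g*(2*q+1) + 1))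
    (a : ℕ) (ha1 : 1 ≤ a) (ha2 : a ≤ 2*r)
    (hmem : (-((a:ℕ) : ZMod (2*k+1))) ∈ codeSet r k) :
    (a*(4*r+2-g)) % (4*r+2) ≤ 2*r := by
  have han : a ≤ 2*k+1 := by omega
  have hvlt : 2*k+1 - a < 2*k+1 := by omega
  have hcast : (((2*k+1 - a : ℕ) : ℕ) : ZMod (2*k+1)) = -((a:ℕ) : ZMod (2*k+1)) := by
    rw [Nat.cast_sub han, ZMod.natCast_self]
    ring
  rw [← hcast] at hmem
  obtain ⟨l, hl, hld⟩ := (mem_code_iff _ hvlt).mp hmem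
  set G' : ℕ := 4*r+2-g with hG'def
  have hG'odd : G' % 2 = 1 := by omega
  have hG'3 : 3 ≤ G' := by omega
  have hG'top : G' ≤ 4*r-1 := by omega
  set M : ℕ := (a*G') % (4*r+2) with hMdef
  have hMlt : M < 4*r+2 := Nat.mod_lt _ (by omega)
  -- two divisibility facts
  have d1 : ((4*r+2 : ℕ) : ℤ) ∣ (((l:ℤ)+1)*((2*k+1 : ℕ):ℤ) - a) := by
    have hc : ((l*(2*k+1) + (2*k+1 - a) : ℕ) : ℤ)
        = ((l:ℤ)+1)*((2*k+1 : ℕ):ℤ) - (a:ℤ) := by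
      push_cast [Nat.cast_sub han]
      ring
    rw [← hc]
    exact_mod_cast Int.natCast_dvd_natCast.mpr hld
  have hbase : (M : ℤ) ≡ (a*G' : ℕ) [ZMOD ((4*r+2 : ℕ) : ℤ)] := by
    have hnm : (a*G') % (4*r+2) ≡ a*G' [MOD 4*r+2] := Nat.mod_modEq _ _
    exact Int.modEq_iff_dvd.mpr (by exact_mod_cast hnm.dvd)
  have hM2 : (M : ℤ) ≡ (a*G' : ℕ) [ZMOD 2] :=
    hbase.of_dvd (by push_cast; exact ⟨(2*r+1 : ℤ), by ring⟩)
  have hMr : (M : ℤ) ≡ (a*G' : ℕ) [ZMOD ((2*r+1 : ℕ) : ℤ)] :=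
    hbase.of_dvd (by push_cast; exact ⟨2, by ring⟩)
  have hn2 : ((2*k+1 : ℕ) : ℤ) ≡ 1 [ZMOD 2] := Int.modEq_iff_dvd.mpr (by push_cast; omega)
  have hnr : ((2*k+1 : ℕ) : ℤ) ≡ ((2*q+1 : ℕ) : ℤ) [ZMOD ((2*r+1 : ℕ) : ℤ)] := by
    refine Int.modEq_iff_dvd.mpr ⟨-(2*p : ℤ), ?_⟩
    rw [hk]; push_cast; ring
  have hG'cast : ((G' : ℕ) : ℤ) = 4*(r:ℤ)+2 - g := by
    rw [hG'def]
    push_cast [Nat.cast_sub (show g ≤ 4*r+2 by omega)]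
    ring
  have d2 : ((4*r+2 : ℕ) : ℤ) ∣ ((M:ℤ)*((2*k+1 : ℕ):ℤ) - a) := by
    have div2 : (2:ℤ) ∣ ((M:ℤ)*((2*k+1 : ℕ):ℤ) - a) := by
      have step : (M:ℤ)*((2*k+1 : ℕ):ℤ) - a ≡ ((a*G' : ℕ):ℤ)*1 - a [ZMOD 2] :=
        (hM2.mul hn2).sub_right _
      have hrhs : (2:ℤ) ∣ ((a*G' : ℕ):ℤ)*1 - a := by
        have heq : ((a*G' : ℕ):ℤ)*1 - a = (a:ℤ)*((G':ℤ) - 1) := by push_cast; ring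
        rw [heq]
        have h2 : (2:ℤ) ∣ ((G':ℤ) - 1) := by omega
        exact Dvd.dvd.mul_left h2 _
      exact Int.modEq_zero_iff_dvd.mp (step.trans (Int.modEq_zero_iff_dvd.mpr hrhs))
    have divr : ((2*r+1 : ℕ):ℤ) ∣ ((M:ℤ)*((2*k+1 : ℕ):ℤ) - a) := by
      have step : (M:ℤ)*((2*k+1 : ℕ):ℤ) - a ≡ ((a*G' : ℕ):ℤ)*((2*q+1 : ℕ):ℤ) - a
          [ZMOD ((2*r+1 : ℕ):ℤ)] := (hMr.mul hnr).sub_right _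
      have hrhs : ((2*r+1 : ℕ):ℤ) ∣ ((a*G' : ℕ):ℤ)*((2*q+1 : ℕ):ℤ) - a := by
        have heq : ((a*G' : ℕ):ℤ)*((2*q+1 : ℕ):ℤ) - a
            = (a:ℤ)*((G':ℤ)*((2*q+1 : ℕ):ℤ) - 1) := by push_cast; ring
        rw [heq]
        have hsub : ((G':ℤ)*((2*q+1 : ℕ):ℤ) - 1)
            = ((2*r+1 : ℕ):ℤ)*(2*((2*q+1 : ℕ):ℤ)) - (((g*(2*q+1) + 1 : ℕ)):ℤ) := by
          rw [hG'cast]; push_cast; ring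
        rw [hsub]
        have hdd : ((2*r+1 : ℕ):ℤ) ∣
            (((2*r+1 : ℕ):ℤ)*(2*((2*q+1 : ℕ):ℤ)) - (((g*(2*q+1) + 1 : ℕ)):ℤ)) :=
          dvd_sub ⟨2*((2*q+1 : ℕ):ℤ), rfl⟩ (Int.natCast_dvd_natCast.mpr hgd)
        exact Dvd.dvd.mul_left hdd _
      exact Int.modEq_zero_iff_dvd.mp (step.trans (Int.modEq_zero_iff_dvd.mpr hrhs))
    have hcop2 : IsCoprime (2 : ℤ) ((2*r+1 : ℕ) : ℤ) := by
      have : Nat.Coprime 2 (2*r+1) := (Nat.prime_two.coprime_iff_not_dvd).mpr (by omega)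
      exact_mod_cast Nat.isCoprime_iff_coprime.mpr this
    have h4 : ((4*r+2 : ℕ) : ℤ) = 2 * ((2*r+1 : ℕ) : ℤ) := by push_cast; ring
    rw [h4]
    exact hcop2.mul_dvd div2 divr
  -- M = l + 1
  have hdiff : ((4*r+2 : ℕ) : ℤ) ∣ ((M:ℤ) - ((l:ℤ)+1)) * ((2*k+1 : ℕ):ℤ) := by
    have heq : ((M:ℤ) - ((l:ℤ)+1)) * ((2*k+1 : ℕ):ℤ)
        = ((M:ℤ)*((2*k+1 : ℕ):ℤ) - a) - (((l:ℤ)+1)*((2*k+1 : ℕ):ℤ) - a) := by ring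
    rw [heq]
    exact dvd_sub d2 d1
  have hcop : IsCoprime ((4*r+2 : ℕ) : ℤ) ((2*k+1 : ℕ) : ℤ) :=
    Nat.isCoprime_iff_coprime.mpr (coprime_s hg)
  have hsmall := hcop.dvd_of_dvd_mul_right hdiff
  have hMl : (M:ℤ) = (l:ℤ)+1 := by
    have hz : ((M:ℤ) - ((l:ℤ)+1)) = 0 := by
      apply int_eq_of_dvd_small (s := ((4*r+2 : ℕ) : ℤ)) (by push_cast; omega) hsmall
      · push_cast; omega
      · push_cast; omega
    omega
  -- exclude M = 2r+1
  have hMne : M ≠ 2*r+1 := by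
    intro hMeq
    have hdvdM : ((2*r+1 : ℕ):ℤ) ∣ (M:ℤ) := by rw [hMeq]
    have : ((2*r+1 : ℕ):ℤ) ∣ ((a*G' : ℕ):ℤ) := by
      have h1 : ((2*r+1 : ℕ):ℤ) ∣ ((a*G' : ℕ):ℤ) - (M:ℤ) := Int.ModEq.dvd hMr
      have h2 := dvd_add h1 hdvdM
      simpa using h2
    have hcopG : IsCoprime ((2*r+1 : ℕ):ℤ) ((G' : ℕ):ℤ) := by
      apply Nat.isCoprime_iff_coprime.mpr
      have hcg := coprime_g (r := r) (q := q) g hgd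
      have h1 : G' + g = (2*r+1)*2 := by omega
      have := Nat.coprime_add_mul_right_right (2*r+1) G' 0
      -- G' = (2r+1)*2 - g ; show coprime via: gcd (2r+1) G' = gcd (2r+1) (G'+g - g)..
      -- easier: gcd (2r+1) G' ∣ g
      have hd : Nat.gcd (2*r+1) G' ∣ g := by
        have hdG : Nat.gcd (2*r+1) G' ∣ G' := Nat.gcd_dvd_right _ _
        have hdr : Nat.gcd (2*r+1) G' ∣ (2*r+1)*2 := Dvd.dvd.mul_right (Nat.gcd_dvd_left _ _) _
        have : Nat.gcd (2*r+1) G' ∣ (G' + g) := h1 ▸ hdr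
        exact (Nat.dvd_add_right hdG).mp this
      have hdr2 : Nat.gcd (2*r+1) G' ∣ Nat.gcd (2*r+1) g :=
        Nat.dvd_gcd (Nat.gcd_dvd_left _ _) hd
      rw [hcg] at hdr2
      exact Nat.eq_one_of_dvd_one hdr2
    have hdvda : ((2*r+1 : ℕ):ℤ) ∣ (a:ℤ) := by
      apply hcopG.dvd_of_dvd_mul_right
      have heq2 : ((a*G' : ℕ):ℤ) = (a:ℤ) * ((G':ℕ):ℤ) := by push_cast; ring
      rw [← heq2]
      exact this
    have := Int.le_of_dvd (by push_cast; omega) hdvda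
    push_cast at this
    omega
  omega

lemma no_block (hr : 1 ≤ r) (hq1 : 1 ≤ q) (hq2 : q ≤ 2*r-1)
    (hg : Nat.gcd (2*r+1) (2*k+1) = 1) (hk : k = (2*r+1)*p + q) (hklb : 2*r+2 ≤ k)
    (α β : ℕ) (hab : α + β = 2*r)
    (hpos : ∀ v : ℕ, v ≤ β → ((v:ℕ) : ZMod (2*k+1)) ∈ codeSet r k)
    (hneg : ∀ a : ℕ, 1 ≤ a → a ≤ α → (-((a:ℕ) : ZMod (2*k+1))) ∈ codeSet r k) : False := by
  obtain ⟨g, hgodd, hg3, hgtop, hgmid, hgd⟩ := exists_gamma hr hq1 hq2 hg hk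
  have pv : ∀ v : ℕ, v ≤ β → (v*g) % (4*r+2) ≤ 2*r := fun v hv =>
    pos_nec hr hg hk g hgodd hgd v (by omega) (hpos v hv)
  have pa : ∀ a : ℕ, 1 ≤ a → a ≤ α → (a*(4*r+2-g)) % (4*r+2) ≤ 2*r := fun a h1 h2 =>
    neg_nec hr hg hk hklb g hgodd hg3 hgtop hgd a h1 (by omega) (hneg a h1 h2)
  rcases Nat.lt_or_ge g (2*r+1) with hcase | hcase
  · -- g ≤ 2r, so 4r+2-g ≥ 2r+2
    have hα : α = 0 := by
      by_contra hne
      have := pa 1 (by omega) (by omega)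
      rw [one_mul, Nat.mod_eq_of_lt (by omega)] at this
      omega
    have hβ : β = 2*r := by omega
    set m : ℕ := 2*r/g + 1 with hmdef
    have hdm := Nat.div_add_mod (2*r) g
    have hmlt : 2*r % g < g := Nat.mod_lt _ (by omega)
    have hdle : 2*r/g ≤ 2*r/3 := Nat.div_le_div_left hg3 (by omega)
    have hm2r : m ≤ 2*r := by omega
    have hprod : m*g = g*(2*r/g) + g := by rw [hmdef]; ring
    have hlow : 2*r < m*g :=
      calc 2*r = g*(2*r/g) + 2*r % g := hdm.symm
        _ < g*(2*r/g) + g := Nat.add_lt_add_left hmlt _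
        _ = m*g := hprod.symm
    have hhigh : m*g ≤ 2*r + g :=
      calc m*g = g*(2*r/g) + g := hprod
        _ ≤ 2*r + g := Nat.add_le_add_right (Nat.le.intro hdm) _
    have hfin := pv m (by rw [hβ]; exact hm2r)
    rw [Nat.mod_eq_of_lt (lt_of_le_of_lt hhigh (by omega))] at hfin
    exact absurd (lt_of_lt_of_le hlow hfin) (lt_irrefl _)
  · -- g ≥ 2r+2 (g ≠ 2r+1), so G' := 4r+2-g ≤ 2r
    have hgge : 2*r+2 ≤ g := by omega
    set G' : ℕ := 4*r+2-g with hG'def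
    have hG'le : G' ≤ 2*r := by omega
    have hG'3 : 3 ≤ G' := by omega
    have hβ : β = 0 := by
      by_contra hne
      have := pv 1 (by omega)
      rw [one_mul, Nat.mod_eq_of_lt (by omega)] at this
      omega
    have hα : α = 2*r := by omega
    set m : ℕ := 2*r/G' + 1 with hmdef
    have hdm := Nat.div_add_mod (2*r) G'
    have hmlt : 2*r % G' < G' := Nat.mod_lt _ (by omega)
    have hdle : 2*r/G' ≤ 2*r/3 := Nat.div_le_div_left hG'3 (by omega)
    have hm2r : m ≤ 2*r := by omega
    have hprod : m*G' = G'*(2*r/G') + G' := by rw [hmdef]; ring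
    have hlow : 2*r < m*G' :=
      calc 2*r = G'*(2*r/G') + 2*r % G' := hdm.symm
        _ < G'*(2*r/G') + G' := Nat.add_lt_add_left hmlt _
        _ = m*G' := hprod.symm
    have hhigh : m*G' ≤ 2*r + G' :=
      calc m*G' = G'*(2*r/G') + G' := hprod
        _ ≤ 2*r + G' := Nat.add_le_add_right (Nat.le.intro hdm) _
    have hfin := pa m (by rw [hmdef]; exact Nat.le_add_left 1 _) (by rw [hα]; exact hm2r)
    rw [Nat.mod_eq_of_lt (lt_of_le_of_lt hhigh (by omega))] at hfin
    exact absurd (lt_of_lt_of_le hlow hfin) (lt_irrefl _)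

-- representation lemmas
lemma exists_rep (hg : Nat.gcd (2*r+1) (2*k+1) = 1) (z : ZMod (2*k+1)) :
    ∃ i : ℕ, i ≤ 2*k ∧ z = ((i*(4*r+2) : ℕ) : ZMod (2*k+1)) := by
  haveI : NeZero (2*k+1) := ⟨by omega⟩
  set u : (ZMod (2*k+1))ˣ := ZMod.unitOfCoprime (4*r+2) (coprime_s hg) with hudef
  set w : ZMod (2*k+1) := z * ((u⁻¹ : (ZMod (2*k+1))ˣ) : ZMod (2*k+1)) with hwdef
  refine ⟨w.val, by have := ZMod.val_lt w; omega, ?_⟩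
  rw [Nat.cast_mul, ZMod.natCast_val, ZMod.cast_id]
  have hcu : ((4*r+2 : ℕ) : ZMod (2*k+1)) = ↑u := (ZMod.coe_unitOfCoprime _ _).symm
  rw [hcu]
  exact (Units.inv_mul_cancel_right z u).symm

lemma rep_inj (hg : Nat.gcd (2*r+1) (2*k+1) = 1) (i j : ℕ) (hi : i < 2*k+1) (hj : j < 2*k+1)
    (h : ((i*(4*r+2) : ℕ) : ZMod (2*k+1)) = ((j*(4*r+2) : ℕ) : ZMod (2*k+1))) : i = j := by
  have hme : i*(4*r+2) ≡ j*(4*r+2) [MOD 2*k+1] := (ZMod.natCast_eq_natCast_iff _ _ _).mp h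
  have hcop : Nat.gcd (2*k+1) (4*r+2) = 1 := (coprime_s hg).symm
  have := Nat.ModEq.cancel_right_of_coprime hcop hme
  unfold Nat.ModEq at this
  rw [Nat.mod_eq_of_lt hi, Nat.mod_eq_of_lt hj] at this
  exact this

lemma notMem_iff (hg : Nat.gcd (2*r+1) (2*k+1) = 1) (i : ℕ) (hi : i ≤ 2*k) :
    ((i*(4*r+2) : ℕ) : ZMod (2*k+1)) ∉ codeSet r k ↔ k+1 ≤ i := by
  constructor
  · intro h
    by_contra hc
    exact h ⟨i, by omega, rfl⟩
  · intro hik hmem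
    obtain ⟨j, hjk, heq⟩ := hmem
    have := rep_inj hg i j (by omega) (by omega) heq
    omega

lemma cast_self_zero : ((2*k+1 : ℕ) : ZMod (2*k+1)) = 0 := ZMod.natCast_self _

lemma shift_eq (i : ℕ) :
    ((i*(4*r+2) : ℕ) : ZMod (2*k+1)) - ((2*r+1 : ℕ) : ZMod (2*k+1))
      = (((i+k)*(4*r+2) : ℕ) : ZMod (2*k+1)) := by
  have h0 := cast_self_zero (k := k)
  push_cast at h0 ⊢
  linear_combination (-(2*(r : ZMod (2*k+1))+1)) * h0

lemma shift_eq' (i : ℕ) :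
    ((i*(4*r+2) : ℕ) : ZMod (2*k+1)) + ((2*r+1 : ℕ) : ZMod (2*k+1))
      = (((i+k+1)*(4*r+2) : ℕ) : ZMod (2*k+1)) := by
  have h0 := cast_self_zero (k := k)
  push_cast at h0 ⊢
  linear_combination (-(2*(r : ZMod (2*k+1))+1)) * h0

lemma rep_reduce (i : ℕ) :
    (((i + (2*k+1))*(4*r+2) : ℕ) : ZMod (2*k+1)) = ((i*(4*r+2) : ℕ) : ZMod (2*k+1)) := by
  have h1 : (i + (2*k+1))*(4*r+2) = i*(4*r+2) + (2*k+1)*(4*r+2) := by ring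
  rw [h1, Nat.cast_add, Nat.cast_mul, Nat.cast_mul, cast_self_zero, zero_mul, add_zero]

lemma fact2 (hg : Nat.gcd (2*r+1) (2*k+1) = 1) (hklb : 2*r+2 ≤ k) (z : ZMod (2*k+1))
    (h : z ∉ codeSet r k) : z - ((2*r+1 : ℕ) : ZMod (2*k+1)) ∈ codeSet r k := by
  obtain ⟨i, hi, rfl⟩ := exists_rep hg z
  have hik : k+1 ≤ i := (notMem_iff hg i hi).mp h
  rw [shift_eq]
  have hsplit : i + k = (i - k - 1) + (2*k+1) := by omega
  rw [hsplit, rep_reduce]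
  exact ⟨i - k - 1, by omega, rfl⟩

lemma fact3 (hg : Nat.gcd (2*r+1) (2*k+1) = 1) (hklb : 2*r+2 ≤ k) (z : ZMod (2*k+1))
    (h : z ∈ codeSet r k) (hz : z ≠ 0) :
    z - ((2*r+1 : ℕ) : ZMod (2*k+1)) ∉ codeSet r k := by
  obtain ⟨j, hjk, rfl⟩ := h
  have hj1 : 1 ≤ j := by
    rcases Nat.eq_zero_or_pos j with h0 | h0
    · exfalso; apply hz; rw [h0]; simp
    · exact h0
  rw [shift_eq]
  exact (notMem_iff hg (j+k) (by omega)).mpr (by omega)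

lemma fact4 (hg : Nat.gcd (2*r+1) (2*k+1) = 1) (hklb : 2*r+2 ≤ k) (z : ZMod (2*k+1))
    (h : z ∉ codeSet r k) : z + ((2*r+1 : ℕ) : ZMod (2*k+1)) ∈ codeSet r k := by
  obtain ⟨i, hi, rfl⟩ := exists_rep hg z
  have hik : k+1 ≤ i := (notMem_iff hg i hi).mp h
  rw [shift_eq']
  have hsplit : i + k + 1 = (i - k) + (2*k+1) := by omega
  rw [hsplit, rep_reduce]
  exact ⟨i - k, by omega, rfl⟩

lemma dominate (hr : 1 ≤ r) (hq1 : 1 ≤ q) (hq2 : q ≤ 2*r-1)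
    (hg : Nat.gcd (2*r+1) (2*k+1) = 1) (hk : k = (2*r+1)*p + q) (hklb : 2*r+2 ≤ k)
    (x : ZMod (2*k+1)) :
    ∃ j : ℕ, j ≤ 2*r ∧ x + ((j:ℕ) : ZMod (2*k+1)) ∈ codeSet r k := by
  by_contra hx
  push_neg at hx
  set c : ZMod (2*k+1) := ((2*r+1 : ℕ) : ZMod (2*k+1)) with hcdef
  have P : ∀ m : ℕ, ∀ j : ℕ, j ≤ 2*r →
      ((m % 2 = 0 → x + ((j:ℕ) : ZMod (2*k+1)) - ((m:ℕ) : ZMod (2*k+1))*c ∉ codeSet r k) ∧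
       (m % 2 = 1 → x + ((j:ℕ) : ZMod (2*k+1)) - ((m:ℕ) : ZMod (2*k+1))*c ∈ codeSet r k)) := by
    intro m
    induction m with
    | zero =>
      intro j hj
      constructor
      · intro _
        have h0 : x + ((j:ℕ) : ZMod (2*k+1)) - ((0:ℕ) : ZMod (2*k+1))*c
            = x + ((j:ℕ) : ZMod (2*k+1)) := by push_cast; ring
        rw [h0]
        exact hx j hj
      · intro h; simp at h
    | succ m ih =>
      intro j hj
      have key : x + ((j:ℕ) : ZMod (2*k+1)) - (((m+1 : ℕ)) : ZMod (2*k+1))*c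
          = (x + ((j:ℕ) : ZMod (2*k+1)) - ((m:ℕ) : ZMod (2*k+1))*c) - c := by
        push_cast; ring
      constructor
      · intro he
        have hmo : m % 2 = 1 := by omega
        have hmem := (ih j hj).2 hmo
        have hnz : x + ((j:ℕ) : ZMod (2*k+1)) - ((m:ℕ) : ZMod (2*k+1))*c ≠ 0 := by
          intro hz0
          refine no_block hr hq1 hq2 hg hk hklb j (2*r - j) (by omega) ?_ ?_
          · intro v hv
            have hcast : ((v:ℕ) : ZMod (2*k+1))
                = x + (((j+v : ℕ)) : ZMod (2*k+1)) - ((m:ℕ) : ZMod (2*k+1))*c := by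
              push_cast
              push_cast at hz0
              linear_combination -hz0
            rw [hcast]
            exact (ih (j+v) (by omega)).2 hmo
          · intro a ha1 ha2
            have hcast : (-((a:ℕ) : ZMod (2*k+1)))
                = x + (((j-a : ℕ)) : ZMod (2*k+1)) - ((m:ℕ) : ZMod (2*k+1))*c := by
              rw [Nat.cast_sub ha2]
              push_cast
              push_cast at hz0
              linear_combination -hz0
            rw [hcast]
            exact (ih (j-a) (by omega)).2 hmo
        rw [key]
        exact fact3 hg hklb _ hmem hnz
      · intro ho
        have hme : m % 2 = 0 := by omega
        rw [key]
        exact fact2 hg hklb _ ((ih j hj).1 hme)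
  have hP := (P (2*k+1) 0 (by omega)).2 (by omega)
  rw [cast_self_zero, zero_mul, sub_zero] at hP
  exact hx 0 (by omega) hP

lemma dominate_ball (hr : 1 ≤ r) (hq1 : 1 ≤ q) (hq2 : q ≤ 2*r-1)
    (hg : Nat.gcd (2*r+1) (2*k+1) = 1) (hk : k = (2*r+1)*p + q) (hklb : 2*r+2 ≤ k)
    (x : ZMod (2*k+1)) :
    ∃ w ∈ codeSet r k, ∃ j : ℤ, j.natAbs ≤ r ∧ w = x + ((j : ℤ) : ZMod (2*k+1)) := by
  obtain ⟨j, hj, hmem⟩ := dominate hr hq1 hq2 hg hk hklb (x - ((r:ℕ) : ZMod (2*k+1)))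
  refine ⟨_, hmem, (j : ℤ) - r, by omega, ?_⟩
  push_cast
  ring

lemma code_card (hg : Nat.gcd (2*r+1) (2*k+1) = 1) : (codeSet r k).ncard = k + 1 := by
  classical
  have hset : codeSet r k
      = ↑((Finset.range (k+1)).image (fun i : ℕ => ((i*(4*r+2) : ℕ) : ZMod (2*k+1)))) := by
    ext z
    simp only [codeSet, Set.mem_setOf_eq, Finset.coe_image, Set.mem_image, Finset.mem_coe,
      Finset.mem_range]
    constructor
    · rintro ⟨i, hi, rfl⟩; exact ⟨i, by omega, rfl⟩
    · rintro ⟨i, hi, rfl⟩; exact ⟨i, by omega, rfl⟩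
  rw [hset, Set.ncard_coe_finset, Finset.card_image_of_injOn, Finset.card_range]
  intro i hi j hj h
  simp only [Finset.coe_range, Set.mem_Iio] at hi hj
  exact rep_inj hg i j (by omega) (by omega) h


end arith

lemma mem_Dr_iff {n r : ℕ} [Fact (1 < n)] {D : Set (ZMod n)} {x z : ZMod n} :
    z ∈ Dr (cycleG n) r D x ↔ z ∈ D ∧ ∃ j : ℤ, j.natAbs ≤ r ∧ z = x + ((j : ℤ) : ZMod n) := by
  unfold Dr
  rw [Set.mem_setOf_eq, dist_le_iff]

lemma intcast_ne_zero {k : ℕ} (t : ℤ) (h1 : 0 < t) (h2 : t < 2*k+1) :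
    ((t : ℤ) : ZMod (2*k+1)) ≠ 0 := by
  haveI : NeZero (2*k+1) := ⟨by omega⟩
  intro h
  have hd := (ZMod.intCast_zmod_eq_zero_iff_dvd _ _).mp h
  have := Int.le_of_dvd h1 hd
  push_cast at this
  omega

section upperlemmas

variable {r q k p : ℕ}

lemma distinct_core (hr : 1 ≤ r) (hq1 : 1 ≤ q) (hq2 : q ≤ 2*r-1)
    (hg : Nat.gcd (2*r+1) (2*k+1) = 1) (hk : k = (2*r+1)*p + q) (hklb : 2*r+2 ≤ k)
    (x y : ZMod (2*k+1)) (hd1 : 1 ≤ (y - x).val) (hdk : (y-x).val ≤ k) :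
    Dr (cycleG (2*k+1)) r (codeSet r k) x ≠ Dr (cycleG (2*k+1)) r (codeSet r k) y := by
  haveI : Fact (1 < 2*k+1) := ⟨by omega⟩
  haveI : NeZero (2*k+1) := ⟨by omega⟩
  intro heq
  set d : ℕ := (y - x).val with hddef
  have hy : y = x + ((d:ℕ) : ZMod (2*k+1)) := by
    rw [hddef, ZMod.natCast_val, ZMod.cast_id]; ring
  rcases le_or_gt d (2*r) with hcase | hcase
  · set z : ZMod (2*k+1) := x + (((-(r:ℤ)) : ℤ) : ZMod (2*k+1)) with hzdef
    by_cases hzmem : z ∈ codeSet r k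
    · have hz_dr : z ∈ Dr (cycleG (2*k+1)) r (codeSet r k) x :=
        mem_Dr_iff.mpr ⟨hzmem, ⟨-(r:ℤ), by simp, rfl⟩⟩
      rw [heq] at hz_dr
      obtain ⟨-, j, hj, hzy⟩ := mem_Dr_iff.mp hz_dr
      rw [hy, hzdef] at hzy
      have hcast : (((d : ℤ) + j + r : ℤ) : ZMod (2*k+1)) = 0 := by
        push_cast at hzy ⊢
        linear_combination -hzy
      exact intcast_ne_zero _ (by omega) (by omega) hcast
    · have hwmem := fact4 hg hklb z hzmem
      have hw_dr : z + ((2*r+1:ℕ) : ZMod (2*k+1)) ∈ Dr (cycleG (2*k+1)) r (codeSet r k) y :=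
        mem_Dr_iff.mpr ⟨hwmem, ⟨(r:ℤ)+1-(d:ℤ), by omega, by rw [hy, hzdef]; push_cast; ring⟩⟩
      rw [← heq] at hw_dr
      obtain ⟨-, j, hj, hwx⟩ := mem_Dr_iff.mp hw_dr
      rw [hzdef] at hwx
      have hcast : (((r:ℤ) + 1 - j : ℤ) : ZMod (2*k+1)) = 0 := by
        push_cast at hwx ⊢
        linear_combination hwx
      exact intcast_ne_zero _ (by omega) (by omega) hcast
  · obtain ⟨w, hwmem, i, hi, hwx⟩ := dominate_ball hr hq1 hq2 hg hk hklb x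
    have hw_dr : w ∈ Dr (cycleG (2*k+1)) r (codeSet r k) x :=
      mem_Dr_iff.mpr ⟨hwmem, i, hi, hwx⟩
    rw [heq] at hw_dr
    obtain ⟨-, j, hj, hwy⟩ := mem_Dr_iff.mp hw_dr
    rw [hy] at hwy
    rw [hwy] at hwx
    have hcast : (((d:ℤ) + j - i : ℤ) : ZMod (2*k+1)) = 0 := by
      push_cast at hwx ⊢
      linear_combination hwx
    exact intcast_ne_zero _ (by omega) (by omega) hcast

lemma upper (hr : 1 ≤ r) (hq1 : 1 ≤ q) (hq2 : q ≤ 2*r-1)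
    (hg : Nat.gcd (2*r+1) (2*k+1) = 1) (hk : k = (2*r+1)*p + q) (hklb : 2*r+2 ≤ k) :
    IsIdCode (cycleG (2*k+1)) r (codeSet r k) := by
  haveI : Fact (1 < 2*k+1) := ⟨by omega⟩
  haveI : NeZero (2*k+1) := ⟨by omega⟩
  constructor
  · intro x
    obtain ⟨w, hw, j, hj, hwx⟩ := dominate_ball hr hq1 hq2 hg hk hklb x
    exact ⟨w, mem_Dr_iff.mpr ⟨hw, j, hj, hwx⟩⟩
  · intro x y hxy heq
    have hyx : y - x ≠ 0 := sub_ne_zero_of_ne (Ne.symm hxy)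
    have hd1 : 0 < (y-x).val := ZMod.val_pos.mpr hyx
    rcases le_or_gt ((y-x).val) k with h | h
    · exact distinct_core hr hq1 hq2 hg hk hklb x y hd1 h heq
    · have hxy0 : x - y ≠ 0 := sub_ne_zero_of_ne hxy
      have hneg : x - y = -(y - x) := by ring
      have hval : (x - y).val = 2*k+1 - (y-x).val := by
        rw [hneg, ZMod.neg_val]
        simp [hyx]
      have hvlt := ZMod.val_lt (y - x)
      refine distinct_core hr hq1 hq2 hg hk hklb y x ?_ ?_ heq.symm
      · omega
      · omega

end upperlemmas

section lowerlemmas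

variable {r k : ℕ}

lemma lower (hr : 1 ≤ r) (hg : Nat.gcd (2*r+1) (2*k+1) = 1) (hklb : 2*r+2 ≤ k)
    (D : Set (ZMod (2*k+1))) (hD : IsIdCode (cycleG (2*k+1)) r D) : k+1 ≤ D.ncard := by
  classical
  haveI : Fact (1 < 2*k+1) := ⟨by omega⟩
  haveI : NeZero (2*k+1) := ⟨by omega⟩
  have h1ne : ((1:ℤ) : ZMod (2*k+1)) ≠ 0 := intcast_ne_zero 1 one_pos (by omega)
  have key : ∀ z : ZMod (2*k+1), z ∈ D ∨ z + ((2*r+1:ℕ) : ZMod (2*k+1)) ∈ D := by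
    intro z
    by_contra hcon
    push_neg at hcon
    obtain ⟨h1, h2⟩ := hcon
    have hab : z + ((r:ℕ) : ZMod (2*k+1)) ≠ z + ((r+1:ℕ) : ZMod (2*k+1)) := by
      intro h
      apply h1ne
      have h2c := add_left_cancel h
      push_cast at h2c ⊢
      linear_combination -h2c
    have hne := hD.2 _ _ hab
    have hex : ∃ w, (w ∈ Dr (cycleG (2*k+1)) r D (z + ((r:ℕ) : ZMod (2*k+1)))
          ∧ w ∉ Dr (cycleG (2*k+1)) r D (z + ((r+1:ℕ) : ZMod (2*k+1))))
        ∨ (w ∈ Dr (cycleG (2*k+1)) r D (z + ((r+1:ℕ) : ZMod (2*k+1)))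
          ∧ w ∉ Dr (cycleG (2*k+1)) r D (z + ((r:ℕ) : ZMod (2*k+1)))) := by
      by_contra hno
      push_neg at hno
      apply hne
      ext w
      have := hno w
      tauto
    obtain ⟨w, hw⟩ := hex
    rcases hw with ⟨hwa, hwb⟩ | ⟨hwb, hwa⟩
    · obtain ⟨hwD, i, hi, hwi⟩ := mem_Dr_iff.mp hwa
      by_cases hir : i = -(r:ℤ)
      · apply h1
        have hwz : w = z := by
          rw [hwi, hir]
          push_cast
          ring
        rwa [hwz] at hwD
      · exfalso
        apply hwb
        refine mem_Dr_iff.mpr ⟨hwD, i - 1, by omega, ?_⟩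
        rw [hwi]
        push_cast
        ring
    · obtain ⟨hwD, i, hi, hwi⟩ := mem_Dr_iff.mp hwb
      by_cases hir : i = (r:ℤ)
      · apply h2
        have hwz : w = z + ((2*r+1:ℕ) : ZMod (2*k+1)) := by
          rw [hwi, hir]
          push_cast
          ring
        rwa [hwz] at hwD
      · exfalso
        apply hwa
        refine mem_Dr_iff.mpr ⟨hwD, i + 1, by omega, ?_⟩
        rw [hwi]
        push_cast
        ring
  set u : ZMod (2*k+1) := ((2*r+1 : ℕ) : ZMod (2*k+1)) with hudef
  set S : Finset (ZMod (2*k+1)) := Finset.univ.filter (fun i => u * i ∈ D) with hSdef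
  have hS : ∀ i : ZMod (2*k+1), i ∈ S ∨ i + 1 ∈ S := by
    intro i
    rcases key (u * i) with h | h
    · left
      simp only [hSdef, Finset.mem_filter, Finset.mem_univ, true_and]
      exact h
    · right
      simp only [hSdef, Finset.mem_filter, Finset.mem_univ, true_and]
      have heq2 : u * (i+1) = u * i + u := by ring
      rw [heq2]
      exact h
  have hcount : (Finset.univ : Finset (ZMod (2*k+1))).card ≤ 2 * S.card := by
    apply Finset.card_le_mul_card_image_of_maps_to
      (f := fun i => if i ∈ S then i else i + 1)
    · intro a _
      by_cases h : a ∈ S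
      · simpa [h] using h
      · simp only [h, if_false]
        rcases hS a with h' | h'
        · exact absurd h' h
        · exact h'
    · intro b hb
      have hsub : (Finset.univ.filter (fun a => (if a ∈ S then a else a + 1) = b))
          ⊆ {b, b - 1} := by
        intro a ha
        simp only [Finset.mem_filter, Finset.mem_univ, true_and] at ha
        simp only [Finset.mem_insert, Finset.mem_singleton]
        by_cases h : a ∈ S
        · rw [if_pos h] at ha
          left; exact ha
        · rw [if_neg h] at ha
          right
          rw [← ha]
          ring
      have hc := Finset.card_le_card hsub
      have hc2 : ({b, b-1} : Finset (ZMod (2*k+1))).card ≤ 2 :=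
        (Finset.card_insert_le _ _).trans (by simp)
      omega
  have huniv : (Finset.univ : Finset (ZMod (2*k+1))).card = 2*k+1 := by
    rw [Finset.card_univ, ZMod.card]
  have hu_unit : IsUnit u := ⟨ZMod.unitOfCoprime (2*r+1) hg, ZMod.coe_unitOfCoprime _ _⟩
  have himage : (S.image (fun i => u * i)).card = S.card := by
    apply Finset.card_image_of_injOn
    intro a ha b hb h
    exact hu_unit.mul_right_injective h
  have hsub2 : (S.image (fun i => u * i)) ⊆ D.toFinset := by
    intro w hw
    rw [Finset.mem_image] at hw
    obtain ⟨i, hiS, rfl⟩ := hw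
    rw [Set.mem_toFinset]
    simp only [hSdef, Finset.mem_filter, Finset.mem_univ, true_and] at hiS
    exact hiS
  have hle : S.card ≤ D.toFinset.card := himage ▸ Finset.card_le_card hsub2
  have hncard : D.ncard = D.toFinset.card := Set.ncard_eq_toFinset_card' D
  omega

end lowerlemmas

end StmtSixAux

open StmtSixAux in
theorem stmt6 (r p q k : ℕ) (hr : 1 ≤ r) (hp : 1 ≤ p)
    (hn : 4*r+2 ≤ 2*k+1) (hk : k = (2*r+1)*p + q)
    (hg : Nat.gcd (2*r+1) (2*k+1) = 1)
    (hq1 : 1 ≤ q) (hq2 : q ≤ 2*r-1) (hq0 : q ≠ 0) (hqr : q ≠ r) (hq2r : q ≠ 2*r) :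
    IsLeast {m | ∃ D : Set (ZMod (2*k+1)),
        IsIdCode (cycleG (2*k+1)) r D ∧ D.ncard = m} (k+1) := by
  have hklb : 2*r+2 ≤ k := by
    have h1 : (2*r+1)*1 ≤ (2*r+1)*p := Nat.mul_le_mul_left _ hp
    omega
  constructor
  · exact ⟨codeSet r k, upper hr hq1 hq2 hg hk hklb, code_card hg⟩
  · rintro m ⟨D, hDid, rfl⟩
    exact lower hr hg hklb D hDid
end

section
/- Every r-identifying code D of the odd cycle C_{2k+1} (with 2k+1 ≥ 2r+3) satisfies |D| ≥ k+1. -/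
section helpers
variable {n : ℕ}

lemma cycle_adj' {x y : ZMod n} (h : (cycleG n).Adj x y) : y = x + 1 ∨ y = x - 1 := by
  rw [cycleG, SimpleGraph.fromRel_adj] at h
  rcases h.2 with h2 | h2
  · right; linear_combination -h2
  · left; linear_combination h2

lemma cycle_adj_succ (h1 : (1 : ZMod n) ≠ 0) (x : ZMod n) : (cycleG n).Adj x (x + 1) := by
  rw [cycleG, SimpleGraph.fromRel_adj]
  constructor
  · intro h; exact h1 (by linear_combination -h)
  · right; ring

lemma cycle_walk_sum {x y : ZMod n} (p : (cycleG n).Walk x y) :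
    ∃ m : ℤ, m.natAbs ≤ p.length ∧ y = x + m := by
  induction p with
  | nil => exact ⟨0, by simp⟩
  | cons h p ih =>
    obtain ⟨m, hm, rfl⟩ := ih
    rcases cycle_adj' h with h2 | h2
    · exact ⟨m + 1, by simpa using ⟨by omega, by rw [h2]; ring⟩⟩
    · exact ⟨m - 1, by simpa using ⟨by omega, by rw [h2]; ring⟩⟩

lemma cycle_walk_exists (h1 : (1 : ZMod n) ≠ 0) (x : ZMod n) (t : ℕ) :
    ∃ p : (cycleG n).Walk x (x + t), p.length = t := by
  induction t with
  | zero => exact ⟨SimpleGraph.Walk.nil.copy rfl (by push_cast; ring), by simp⟩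
  | succ t ih =>
    obtain ⟨p, hp⟩ := ih
    have hadj : (cycleG n).Adj (x + t) (x + t + 1) := cycle_adj_succ h1 _
    exact ⟨(p.concat hadj).copy rfl (by push_cast; ring), by simp [hp]⟩

lemma cycle_dist_le_nat (h1 : (1 : ZMod n) ≠ 0) (x : ZMod n) (t : ℕ) :
    (cycleG n).dist x (x + t) ≤ t := by
  obtain ⟨p, hp⟩ := cycle_walk_exists h1 x t
  exact le_trans (SimpleGraph.dist_le p) (le_of_eq hp)

lemma cycle_dist_le (h1 : (1 : ZMod n) ≠ 0) (x : ZMod n) (m : ℤ) :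
    (cycleG n).dist x (x + m) ≤ m.natAbs := by
  obtain ⟨t, rfl | rfl⟩ := Int.eq_nat_or_neg m
  · rw [Int.cast_natCast, Int.natAbs_natCast]
    exact cycle_dist_le_nat h1 x t
  · rw [Int.natAbs_neg, Int.natAbs_natCast]
    have he : x + ((-(t:ℤ) : ℤ) : ZMod n) = x - t := by push_cast; ring
    rw [he, SimpleGraph.dist_comm]
    have := cycle_dist_le_nat h1 (x - t) t
    have h2 : (x - t) + (t : ZMod n) = x := by ring
    rwa [h2] at this

lemma cycle_reachable (h1 : (1 : ZMod n) ≠ 0) [NeZero n] (x y : ZMod n) :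
    (cycleG n).Reachable x y := by
  obtain ⟨p, _⟩ := cycle_walk_exists h1 x (y - x).val
  have : x + ((y - x).val : ZMod n) = y := by rw [ZMod.natCast_val, ZMod.cast_id]; ring
  exact ⟨this ▸ p⟩

lemma cycle_dist_iff (h1 : (1 : ZMod n) ≠ 0) [NeZero n] (x y : ZMod n) (r : ℕ) :
    (cycleG n).dist x y ≤ r ↔ ∃ m : ℤ, m.natAbs ≤ r ∧ y = x + m := by
  constructor
  · intro h
    obtain ⟨p, hp⟩ := ((cycle_reachable h1 x y).exists_walk_length_eq_dist)
    obtain ⟨m, hm, hy⟩ := cycle_walk_sum p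
    exact ⟨m, by omega, hy⟩
  · rintro ⟨m, hm, rfl⟩
    exact le_trans (cycle_dist_le h1 x m) hm

end helpers

theorem stmt7 (r k : ℕ) (hr : 1 ≤ r) (hn : 2*r+3 ≤ 2*k+1)
    (D : Set (ZMod (2*k+1))) (hD : IsIdCode (cycleG (2*k+1)) r D) :
    k + 1 ≤ D.ncard := by
  haveI : NeZero (2*k+1) := ⟨by omega⟩
  haveI : Fact (1 < 2*k+1) := ⟨by omega⟩
  have h1 : (1 : ZMod (2*k+1)) ≠ 0 := one_ne_zero
  set c : ZMod (2*k+1) := ((2*r+1 : ℕ) : ZMod (2*k+1)) with hc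
  -- key claim: for every x, x ∈ D or x + (2r+1) ∈ D
  have key : ∀ x : ZMod (2*k+1), x ∈ D ∨ x + c ∈ D := by
    intro x
    have hne : (x + (r : ℕ) : ZMod (2*k+1)) ≠ x + (r : ℕ) + 1 := by
      intro h; exact h1 (by linear_combination -h)
    have hDrne := hD.2 _ _ hne
    have hiff : ¬ ∀ y, y ∈ Dr (cycleG (2*k+1)) r D (x + (r:ℕ)) ↔
        y ∈ Dr (cycleG (2*k+1)) r D (x + (r:ℕ) + 1) := fun h => hDrne (Set.ext h)
    push_neg at hiff
    obtain ⟨y, hy⟩ := hiff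
    rcases hy with ⟨hy1, hy2⟩ | ⟨hy1, hy2⟩
    · obtain ⟨hyD, hyd⟩ := hy1
      obtain ⟨m, hm, hym⟩ := (cycle_dist_iff h1 _ y r).mp hyd
      have hnot : ¬ ((m - 1).natAbs ≤ r ∧ y = (x + (r:ℕ) + 1) + ((m - 1 : ℤ) : ZMod (2*k+1))) := by
        intro ⟨a, b⟩
        exact hy2 ⟨hyD, (cycle_dist_iff h1 _ y r).mpr ⟨m - 1, a, b⟩⟩
      have hyeq : y = (x + (r:ℕ) + 1) + ((m - 1 : ℤ) : ZMod (2*k+1)) := by rw [hym]; push_cast; ring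
      have hmr : m = -(r : ℤ) := by
        have hgt : r < (m - 1).natAbs := by
          by_contra h
          push_neg at h
          exact hnot ⟨h, hyeq⟩
        omega
      left
      have : y = x := by rw [hym, hmr]; push_cast; ring
      rwa [this] at hyD
    · obtain ⟨hyD, hyd⟩ := hy2
      obtain ⟨m, hm, hym⟩ := (cycle_dist_iff h1 _ y r).mp hyd
      have hnot : ¬ ((m + 1).natAbs ≤ r ∧ y = (x + (r:ℕ)) + ((m + 1 : ℤ) : ZMod (2*k+1))) := by
        intro ⟨a, b⟩
        exact hy1 ⟨hyD, (cycle_dist_iff h1 _ y r).mpr ⟨m + 1, a, b⟩⟩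
      have hyeq : y = (x + (r:ℕ)) + ((m + 1 : ℤ) : ZMod (2*k+1)) := by rw [hym]; push_cast; ring
      have hmr : m = (r : ℤ) := by
        have hgt : r < (m + 1).natAbs := by
          by_contra h
          push_neg at h
          exact hnot ⟨h, hyeq⟩
        omega
      right
      have : y = x + c := by rw [hym, hmr, hc]; push_cast; ring
      rwa [this] at hyD
  -- counting: Dᶜ is disjoint from its translate by c
  set S : Set (ZMod (2*k+1)) := Dᶜ with hS
  have hdisj : Disjoint S ((· + c) '' S) := by
    rw [Set.disjoint_left]
    rintro a haS ⟨s, hsS, rfl⟩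
    rcases key s with h | h
    · exact hsS h
    · exact haS h
  have himg : ((· + c) '' S).ncard = S.ncard :=
    Set.ncard_image_of_injective _ (add_left_injective c)
  have hunion : (S ∪ (· + c) '' S).ncard = S.ncard + ((· + c) '' S).ncard :=
    Set.ncard_union_eq hdisj (Set.toFinite _) (Set.toFinite _)
  have hcard : Nat.card (ZMod (2*k+1)) = 2*k+1 := by
    rw [Nat.card_eq_fintype_card, ZMod.card]
  have hle : (S ∪ (· + c) '' S).ncard ≤ 2*k+1 := by
    calc (S ∪ (· + c) '' S).ncard ≤ (Set.univ : Set (ZMod (2*k+1))).ncard :=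
          Set.ncard_le_ncard (Set.subset_univ _) Set.finite_univ
      _ = 2*k+1 := by rw [Set.ncard_univ, hcard]
  have hSk : S.ncard ≤ k := by omega
  have hcompl : D.ncard + S.ncard = 2*k+1 := by
    rw [hS, Set.ncard_add_ncard_compl, hcard]
  omega
end

section
/- Let P_n be the path on vertices x_1, ..., x_n with n ≥ 2r+1, and let D be an r-identifying code of P_n. Then x_{r+2}, x_{r+3}, ..., x_{2r+1} ∈ D and x_{n-r-1}, x_{n-r-2}, ..., x_{n-2r} ∈ D. -/
lemma pathWalk (n : ℕ) : ∀ (k : ℕ) (a b : Fin n), a.val + k = b.val →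
    ∃ p : (SimpleGraph.pathGraph n).Walk a b, p.length = k := by
  intro k
  induction k with
  | zero =>
    intro a b h
    have : a = b := Fin.ext (by omega)
    subst this
    exact ⟨SimpleGraph.Walk.nil, rfl⟩
  | succ k ih =>
    intro a b h
    have hc : a.val + 1 < n := by have := b.isLt; omega
    set c : Fin n := ⟨a.val + 1, hc⟩ with hcdef
    have hadj : (SimpleGraph.pathGraph n).Adj a c := by
      rw [SimpleGraph.pathGraph_adj]; left; rfl
    obtain ⟨p, hp⟩ := ih c b (by simp [hcdef]; omega)
    exact ⟨SimpleGraph.Walk.cons hadj p, by simp [hp]⟩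

lemma pathWalkLB {n : ℕ} : ∀ {a b : Fin n} (p : (SimpleGraph.pathGraph n).Walk a b),
    ((a.val : ℤ) - b.val).natAbs ≤ p.length := by
  intro a b p
  induction p with
  | nil => simp
  | @cons u c b h p ih =>
    rw [SimpleGraph.pathGraph_adj] at h
    simp only [SimpleGraph.Walk.length_cons]
    omega

lemma pathDist {n : ℕ} (a b : Fin n) :
    (SimpleGraph.pathGraph n).dist a b = ((a.val : ℤ) - b.val).natAbs := by
  apply le_antisymm
  · rcases le_or_gt a.val b.val with h | h
    · obtain ⟨p, hp⟩ := pathWalk n (b.val - a.val) a b (by omega)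
      have := SimpleGraph.dist_le p
      omega
    · obtain ⟨p, hp⟩ := pathWalk n (a.val - b.val) b a (by omega)
      rw [SimpleGraph.dist_comm]
      have := SimpleGraph.dist_le p
      omega
  · obtain ⟨p, hp⟩ := (SimpleGraph.pathGraph_preconnected n a b).exists_walk_length_eq_dist
    have := pathWalkLB p
    omega

lemma memDr {n r : ℕ} {D : Set (Fin n)} {x y : Fin n} :
    y ∈ Dr (SimpleGraph.pathGraph n) r D x ↔ y ∈ D ∧ ((x.val : ℤ) - y.val).natAbs ≤ r := by
  rw [Dr, Set.mem_setOf_eq, pathDist]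

theorem stmt10 (n r : ℕ) (hr : 1 ≤ r) (hn : 2*r+1 ≤ n)
    (D : Set (Fin n)) (hD : IsIdCode (SimpleGraph.pathGraph n) r D) :
    (∀ i : Fin n, r+1 ≤ (i : ℕ) → (i : ℕ) ≤ 2*r → i ∈ D) ∧
    (∀ i : Fin n, n - 2*r - 1 ≤ (i : ℕ) → (i : ℕ) ≤ n - r - 2 → i ∈ D) := by
  constructor
  · intro i h1 h2
    have ha : i.val - r - 1 < n := by omega
    have hb : i.val - r < n := by omega
    set a : Fin n := ⟨i.val - r - 1, ha⟩
    set b : Fin n := ⟨i.val - r, hb⟩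
    have hne : a ≠ b := by
      intro h
      have := congrArg Fin.val h
      simp only [a, b] at this
      omega
    have hdiff := hD.2 a b hne
    -- Dr a ⊆ Dr b
    have hsub : Dr (SimpleGraph.pathGraph n) r D a ⊆ Dr (SimpleGraph.pathGraph n) r D b := by
      intro y hy
      rw [memDr] at hy ⊢
      refine ⟨hy.1, ?_⟩
      have := hy.2
      simp only [a, b] at this ⊢
      omega
    have hex : ∃ y, y ∈ Dr (SimpleGraph.pathGraph n) r D b ∧
        y ∉ Dr (SimpleGraph.pathGraph n) r D a := by
      by_contra hc
      push_neg at hc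
      exact hdiff (Set.Subset.antisymm hsub hc)
    obtain ⟨y, hyb, hya⟩ := hex
    rw [memDr] at hyb
    have hyaa : ¬ (y ∈ D ∧ ((a.val : ℤ) - y.val).natAbs ≤ r) := by rwa [memDr] at hya
    have hy' : ¬ (((a.val : ℤ) - y.val).natAbs ≤ r) := fun h => hyaa ⟨hyb.1, h⟩
    have : y = i := by
      apply Fin.ext
      have h1' := hyb.2
      simp only [a, b] at h1' hy'
      omega
    exact this ▸ hyb.1
  · intro i h1 h2
    have ha : i.val + r + 1 < n := by omega
    have hb : i.val + r < n := by omega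
    set a : Fin n := ⟨i.val + r + 1, ha⟩
    set b : Fin n := ⟨i.val + r, hb⟩
    have hne : a ≠ b := by
      intro h
      have := congrArg Fin.val h
      simp only [a, b] at this
      omega
    have hdiff := hD.2 a b hne
    have hsub : Dr (SimpleGraph.pathGraph n) r D a ⊆ Dr (SimpleGraph.pathGraph n) r D b := by
      intro y hy
      rw [memDr] at hy ⊢
      refine ⟨hy.1, ?_⟩
      have := hy.2
      have := y.isLt
      simp only [a, b] at *
      omega
    have hex : ∃ y, y ∈ Dr (SimpleGraph.pathGraph n) r D b ∧
        y ∉ Dr (SimpleGraph.pathGraph n) r D a := by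
      by_contra hc
      push_neg at hc
      exact hdiff (Set.Subset.antisymm hsub hc)
    obtain ⟨y, hyb, hya⟩ := hex
    rw [memDr] at hyb
    have hyaa : ¬ (y ∈ D ∧ ((a.val : ℤ) - y.val).natAbs ≤ r) := by rwa [memDr] at hya
    have hy' : ¬ (((a.val : ℤ) - y.val).natAbs ≤ r) := fun h => hyaa ⟨hyb.1, h⟩
    have : y = i := by
      apply Fin.ext
      have h1' := hyb.2
      have := y.isLt
      simp only [a, b] at h1' hy'
      omega
    exact this ▸ hyb.1
end

section
/- Let P_n be the path on vertices x_1,...,x_n with n ≥ 2r+1. Then D ⊆ V(P_n) is an r-identifying code if and only if: (1) there are no 2r+2 consecutive vertices with the first and last both not in D; (2) there are no 2r+1 consecutive vertices none of which is in D; (3) {x_{r+2},...,x_{2r+1}} ⊆ D and {x_{n-2r},...,x_{n-r-1}} ⊆ D; (4) {x_1,...,x_{r+1}} ∩ D ≠ ∅ and {x_{n-r},...,x_n} ∩ D ≠ ∅. -/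
lemma pathGraph_walk_exists (n : ℕ) : ∀ (k : ℕ) (x y : Fin n), Nat.dist x.val y.val = k →
    ∃ p : (SimpleGraph.pathGraph n).Walk x y, p.length = k := by
  intro k
  induction k with
  | zero =>
    intro x y h
    have : x = y := Fin.ext (by simp [Nat.dist] at h; omega)
    subst this
    exact ⟨SimpleGraph.Walk.nil, rfl⟩
  | succ k ih =>
    intro x y h
    rcases lt_trichotomy x.val y.val with hlt | heq | hgt
    · have hx1 : x.val + 1 < n := by omega
      have hadj : (SimpleGraph.pathGraph n).Adj x ⟨x.val + 1, hx1⟩ := by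
        rw [SimpleGraph.pathGraph_adj]; left; rfl
      obtain ⟨p, hp⟩ := ih ⟨x.val + 1, hx1⟩ y (by simp [Nat.dist] at h ⊢; omega)
      exact ⟨SimpleGraph.Walk.cons hadj p, by simp [hp]⟩
    · exfalso; simp [Nat.dist, heq] at h
    · have hx1 : x.val - 1 < n := by omega
      have hadj : (SimpleGraph.pathGraph n).Adj x ⟨x.val - 1, hx1⟩ := by
        rw [SimpleGraph.pathGraph_adj]; right; simp; omega
      obtain ⟨p, hp⟩ := ih ⟨x.val - 1, hx1⟩ y (by simp [Nat.dist] at h ⊢; omega)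
      exact ⟨SimpleGraph.Walk.cons hadj p, by simp [hp]⟩

lemma pathGraph_walk_le (n : ℕ) {x y : Fin n} (p : (SimpleGraph.pathGraph n).Walk x y) :
    Nat.dist x.val y.val ≤ p.length := by
  induction p with
  | nil => simp [Nat.dist]
  | cons h q ih =>
    rename_i u v w
    rw [SimpleGraph.pathGraph_adj] at h
    simp [SimpleGraph.Walk.length_cons]
    simp [Nat.dist] at ih ⊢
    omega

lemma pathGraph_dist (n : ℕ) (x y : Fin n) :
    (SimpleGraph.pathGraph n).dist x y = Nat.dist x.val y.val := by
  obtain ⟨p, hp⟩ := pathGraph_walk_exists n _ x y rfl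
  refine le_antisymm (hp ▸ SimpleGraph.dist_le p) ?_
  obtain ⟨q, hq⟩ := SimpleGraph.Reachable.exists_walk_length_eq_dist p.reachable
  exact hq ▸ pathGraph_walk_le n q

lemma mem_Dr_s11 (n r : ℕ) (D : Set (Fin n)) (x z : Fin n) :
    z ∈ Dr (SimpleGraph.pathGraph n) r D x ↔
      z ∈ D ∧ x.val ≤ z.val + r ∧ z.val ≤ x.val + r := by
  show z ∈ D ∧ _ ≤ r ↔ _
  rw [pathGraph_dist]
  simp [Nat.dist]
  intro _; omega
lemma Dr_eq_iff (n r : ℕ) (D : Set (Fin n)) (x y : Fin n) :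
    Dr (SimpleGraph.pathGraph n) r D x = Dr (SimpleGraph.pathGraph n) r D y ↔
      ∀ z : Fin n, (z ∈ D ∧ x.val ≤ z.val + r ∧ z.val ≤ x.val + r) ↔
        (z ∈ D ∧ y.val ≤ z.val + r ∧ z.val ≤ y.val + r) := by
  rw [Set.ext_iff]
  exact forall_congr' fun z => by rw [mem_Dr_s11, mem_Dr_s11]

lemma ne_val_of_notMem {n : ℕ} {D : Set (Fin n)} {z : Fin n} (hz : z ∈ D) {m : ℕ}
    (hm : m < n) (h : (⟨m, hm⟩ : Fin n) ∉ D) : z.val ≠ m := by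
  intro he
  apply h
  have : (⟨m, hm⟩ : Fin n) = z := Fin.ext he.symm
  rw [this]; exact hz

theorem stmt11 (n r : ℕ) (hr : 1 ≤ r) (hn : 2*r+1 ≤ n)
    (D : Set (Fin n)) :
    IsIdCode (SimpleGraph.pathGraph n) r D ↔
      ((∀ i : ℕ, ∀ h : i + (2*r+1) < n,
          (⟨i, by omega⟩ : Fin n) ∈ D ∨ (⟨i + (2*r+1), h⟩ : Fin n) ∈ D) ∧
       (∀ i : ℕ, i + (2*r+1) ≤ n →
          ∃ j : Fin n, i ≤ (j : ℕ) ∧ (j : ℕ) < i + (2*r+1) ∧ j ∈ D) ∧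
       ((∀ i : Fin n, r+1 ≤ (i : ℕ) → (i : ℕ) ≤ 2*r → i ∈ D) ∧
        (∀ i : Fin n, n - 2*r - 1 ≤ (i : ℕ) → (i : ℕ) ≤ n - r - 2 → i ∈ D)) ∧
       ((∃ j : Fin n, (j : ℕ) ≤ r ∧ j ∈ D) ∧
        (∃ j : Fin n, n - r - 1 ≤ (j : ℕ) ∧ j ∈ D))) := by
  have hn0 : 0 < n := by omega
  constructor
  · rintro ⟨hne, hinj⟩
    refine ⟨?_, ?_, ⟨?_, ?_⟩, ?_, ?_⟩
    · -- (1)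
      intro i hi
      by_contra hcon
      push_neg at hcon
      obtain ⟨h0, h1⟩ := hcon
      refine hinj ⟨i+r, by omega⟩ ⟨i+r+1, by omega⟩ (Fin.ne_of_val_ne (by simp)) ?_
      rw [Dr_eq_iff]
      intro z
      constructor
      · rintro ⟨hz, ha, hb⟩
        have e1 := ne_val_of_notMem hz (by omega) h0
        have e2 := ne_val_of_notMem hz hi h1
        exact ⟨hz, by simp at ha hb ⊢; omega, by simp at ha hb ⊢; omega⟩
      · rintro ⟨hz, ha, hb⟩
        have e1 := ne_val_of_notMem hz (by omega) h0
        have e2 := ne_val_of_notMem hz hi h1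
        exact ⟨hz, by simp at ha hb ⊢; omega, by simp at ha hb ⊢; omega⟩
    · -- (2)
      intro i hi
      obtain ⟨z, hz⟩ := hne ⟨i+r, by omega⟩
      rw [mem_Dr_s11] at hz
      obtain ⟨hzD, ha, hb⟩ := hz
      exact ⟨z, by simp at ha; omega, by simp at hb; omega, hzD⟩
    · -- (3a)
      intro i h1 h2
      by_contra hi
      have hiv : i.val < n := i.isLt
      refine hinj ⟨i.val - r - 1, by omega⟩ ⟨i.val - r, by omega⟩
        (Fin.ne_of_val_ne (by first | (simp; omega) | simp | omega)) ?_
      rw [Dr_eq_iff]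
      intro z
      constructor
      · rintro ⟨hz, ha, hb⟩
        have e1 : z.val ≠ i.val := ne_val_of_notMem hz hiv (by simpa using hi)
        exact ⟨hz, by simp at ha hb ⊢; omega, by simp at ha hb ⊢; omega⟩
      · rintro ⟨hz, ha, hb⟩
        have e1 : z.val ≠ i.val := ne_val_of_notMem hz hiv (by simpa using hi)
        exact ⟨hz, by simp at ha hb ⊢; omega, by simp at ha hb ⊢; omega⟩
    · -- (3b)
      intro i h1 h2
      by_contra hi
      have hiv : i.val < n := i.isLt
      refine hinj ⟨i.val + r, by omega⟩ ⟨i.val + r + 1, by omega⟩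
        (Fin.ne_of_val_ne (by simp)) ?_
      rw [Dr_eq_iff]
      intro z
      have hzv : z.val < n := z.isLt
      constructor
      · rintro ⟨hz, ha, hb⟩
        have e1 : z.val ≠ i.val := ne_val_of_notMem hz hiv (by simpa using hi)
        exact ⟨hz, by simp at ha hb ⊢; omega, by simp at ha hb ⊢; omega⟩
      · rintro ⟨hz, ha, hb⟩
        have e1 : z.val ≠ i.val := ne_val_of_notMem hz hiv (by simpa using hi)
        exact ⟨hz, by simp at ha hb ⊢; omega, by simp at ha hb ⊢; omega⟩
    · -- (4a)
      obtain ⟨z, hz⟩ := hne ⟨0, hn0⟩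
      rw [mem_Dr_s11] at hz
      obtain ⟨hzD, ha, hb⟩ := hz
      exact ⟨z, by simp at hb; omega, hzD⟩
    · -- (4b)
      obtain ⟨z, hz⟩ := hne ⟨n-1, by omega⟩
      rw [mem_Dr_s11] at hz
      obtain ⟨hzD, ha, hb⟩ := hz
      exact ⟨z, by simp at ha; omega, hzD⟩
  · rintro ⟨h1, h2, ⟨h3a, h3b⟩, ⟨j1, hj1v, hj1⟩, ⟨j2, hj2v, hj2⟩⟩
    have hne : ∀ x : Fin n, (Dr (SimpleGraph.pathGraph n) r D x).Nonempty := by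
      intro x
      have hxv : x.val < n := x.isLt
      have hj1v' : j1.val < n := j1.isLt
      have hj2v' : j2.val < n := j2.isLt
      rcases le_or_gt x.val r with hx | hx
      · exact ⟨j1, (mem_Dr_s11 n r D x j1).2 ⟨hj1, by omega, by omega⟩⟩
      rcases le_or_gt (n - r - 1) x.val with hx2 | hx2
      · exact ⟨j2, (mem_Dr_s11 n r D x j2).2 ⟨hj2, by omega, by omega⟩⟩
      · obtain ⟨j, hja, hjb, hjD⟩ := h2 (x.val - r) (by omega)
        exact ⟨j, (mem_Dr_s11 n r D x j).2 ⟨hjD, by omega, by omega⟩⟩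
    have key : ∀ x y : Fin n, x.val < y.val →
        Dr (SimpleGraph.pathGraph n) r D x = Dr (SimpleGraph.pathGraph n) r D y → False := by
      intro x y hlt heq
      have hxv : x.val < n := x.isLt
      have hyv : y.val < n := y.isLt
      rw [Dr_eq_iff] at heq
      rcases le_or_gt (x.val + 2*r + 1) y.val with hA | hB
      · obtain ⟨z, hz⟩ := hne x
        rw [mem_Dr_s11] at hz
        obtain ⟨hzD, ha, hb⟩ := hz
        have := (heq z).1 ⟨hzD, ha, hb⟩
        omega
      · rcases lt_or_ge x.val r with hx | hx
        · have hd : x.val + r + 1 < n := by omega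
          have hdD : (⟨x.val + r + 1, hd⟩ : Fin n) ∈ D :=
            h3a ⟨x.val + r + 1, hd⟩ (by first | (simp; omega) | simp | omega) (by first | (simp; omega) | simp | omega)
          have := (heq ⟨x.val + r + 1, hd⟩).2 ⟨hdD, by first | (simp; omega) | simp | omega, by first | (simp; omega) | simp | omega⟩
          first | (simp at this; omega) | simp at this
        rcases lt_or_ge (n - r - 1) y.val with hy | hy
        · have hd : y.val - r - 1 < n := by omega
          have hdD : (⟨y.val - r - 1, hd⟩ : Fin n) ∈ D :=
            h3b ⟨y.val - r - 1, hd⟩ (by first | (simp; omega) | simp | omega) (by first | (simp; omega) | simp | omega)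
          have := (heq ⟨y.val - r - 1, hd⟩).1 ⟨hdD, by first | (simp; omega) | simp | omega, by first | (simp; omega) | simp | omega⟩
          first | (simp at this; omega) | simp at this
        · have hc : (y.val - r - 1) + (2*r+1) < n := by omega
          rcases h1 (y.val - r - 1) hc with hcD | hcD
          · have := (heq ⟨y.val - r - 1, by omega⟩).1 ⟨hcD, by first | (simp; omega) | simp | omega, by first | (simp; omega) | simp | omega⟩
            first | (simp at this; omega) | simp at this
          · have := (heq ⟨(y.val - r - 1) + (2*r+1), hc⟩).2 ⟨hcD, by first | (simp; omega) | simp | omega, by first | (simp; omega) | simp | omega⟩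
            first | (simp at this; omega) | simp at this
    refine ⟨hne, ?_⟩
    intro x y hxy heq
    rcases lt_trichotomy x.val y.val with h | h | h
    · exact key x y h heq
    · exact hxy (Fin.ext h)
    · exact key y x h heq.symm
end
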